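/- arXiv:1411.2997 — 8 statements merged into one kernel-verified Lean document; each statement's English description precedes it below -/
import Mathlib

section
/- Let $u, w \in S_n$ and $1 \le k < n$. Then $u \le_k w$ in the $k$-Bruhat order if and only if: (1) for all $a \le k < b \le n$, $u(a) \le w(a)$ and $u(b) \ge w(b)$; and (2) whenever $a < b$, $u(a) < u(b)$, and $w(a) > w(b)$, we have $a \le k < b$. -/
/-- Coxeter length of a permutation of `Fin n`: the number of inversions. -/
def len {n : ℕ} (u : Equiv.Perm (Fin n)) : ℕ :=
  (Finset.univ.filter fun p : Fin n × Fin n => p.1 < p.2 ∧ u p.2 < u p.1).card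

/-- `w` covers `u` in the strong Bruhat order: `w = u·t` for a transposition `t`
and `ℓ(w) = ℓ(u) + 1`. -/
def BruhatCover {n : ℕ} (u w : Equiv.Perm (Fin n)) : Prop :=
  (∃ i j : Fin n, i ≠ j ∧ w = u * Equiv.swap i j) ∧ len w = len u + 1

/-- The strong Bruhat order on `S_n`. -/
def BruhatLE {n : ℕ} (u w : Equiv.Perm (Fin n)) : Prop :=
  Relation.ReflTransGen BruhatCover u w

/-- The image `u({1,…,k})`, zero-indexed as `u({i : i.val < k})`. -/
def kImage {n : ℕ} (k : ℕ) (u : Equiv.Perm (Fin n)) : Finset (Fin n) :=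
  (Finset.univ.filter fun i : Fin n => i.val < k).image u

/-- `w` is a `k`-cover of `u`: a Bruhat cover with `w({1,…,k}) ≠ u({1,…,k})`. -/
def KBruhatCover {n : ℕ} (k : ℕ) (u w : Equiv.Perm (Fin n)) : Prop :=
  BruhatCover u w ∧ kImage k u ≠ kImage k w

/-- The `k`-Bruhat order on `S_n`: transitive closure of `k`-covers. -/
def KBruhatLE {n : ℕ} (k : ℕ) (u w : Equiv.Perm (Fin n)) : Prop :=
  Relation.ReflTransGen (KBruhatCover k) u w

/-- `z` lies in the Young subgroup `S_k × S_{n-k}`, i.e. `z` fixes the sets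
`{1,…,k}` and `{k+1,…,n}` setwise. -/
def IsYoung {n : ℕ} (k : ℕ) (z : Equiv.Perm (Fin n)) : Prop :=
  ∀ i : Fin n, (z i).val < k ↔ i.val < k

/-- `u` is anti-Grassmannian of type `(k,n)`: decreasing on `{1,…,k}` and on
`{k+1,…,n}` (zero-indexed: on `val < k` and on `k ≤ val`). -/
def AntiGrass {n : ℕ} (k : ℕ) (u : Equiv.Perm (Fin n)) : Prop :=
  (∀ a b : Fin n, a < b → b.val < k → u b < u a) ∧
  (∀ a b : Fin n, a < b → k ≤ a.val → u b < u a)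

/-!
A Bruhat cover `u ⋖ u·(a b)`, `a < b`, is a transposition with `u a < u b` such that no `c`
strictly between `a` and `b` has `u c` strictly between `u a` and `u b`: this comes from
`ℓ(u·(a b)) = ℓ(u) + 1 + 2·#{such c}`. It is a `k`-cover iff moreover `a ≤ k < b`, and such a
cover satisfies the criterion; since the criterion is transitive, one direction follows.
Conversely, if the criterion holds for `u ≠ w`, take `a ≤ k` with `u a < w a` and `u a` maximal,
then `b > k` with `w b < u b`, `u a < u b ≤ w a` and `u b` minimal. Every `c` with `u c` strictly
between `u a` and `u b` is then fixed by `w`, which makes `u·(a b)` a `k`-cover of `u` that still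
satisfies the criterion with `w` and is closer to `w` in Spearman's footrule `∑ₓ |u x - w x|`.
-/

section

open Equiv Finset

lemma sum_sum_eq_of_eq_zero_off_pair {α M : Type*} [Fintype α] [DecidableEq α]
    [AddCommMonoid M] {F : α → α → M} {a b : α} (hab : a ≠ b)
    (hF : ∀ i j, i ≠ a → i ≠ b → j ≠ a → j ≠ b → F i j = 0) :
    ∑ i, ∑ j, F i j = F a a + F a b + F b a + F b b +
      ∑ c ∈ ({a, b} : Finset α)ᶜ, (F a c + F c a + F b c + F c b) := by
  have hrow : ∀ i, ∑ j, F i j = F i a + F i b + ∑ j ∈ ({a, b} : Finset α)ᶜ, F i j := fun i => by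
    rw [← sum_add_sum_compl {a, b}, sum_pair hab]
  have hrow_off : ∀ i ∈ ({a, b} : Finset α)ᶜ, ∑ j, F i j = F i a + F i b := fun i hi => by
    simp only [mem_compl, mem_insert, mem_singleton, not_or] at hi
    rw [hrow, sum_eq_zero fun j hj => ?_, add_zero]
    simp only [mem_compl, mem_insert, mem_singleton, not_or] at hj
    exact hF i j hi.1 hi.2 hj.1 hj.2
  rw [← sum_add_sum_compl {a, b}, sum_pair hab, sum_congr rfl hrow_off, hrow a, hrow b]
  simp only [sum_add_distrib]
  abel

variable {n k : ℕ} {u v w : Perm (Fin n)}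

lemma len_eq_sum (v : Perm (Fin n)) :
    (len v : ℤ) = ∑ i, ∑ j, if i < j ∧ v j < v i then 1 else 0 := by
  rw [len, card_filter, ← univ_product_univ, sum_product]
  push_cast
  rfl

lemma len_mul_swap (u : Perm (Fin n)) {a b : Fin n} (hab : a < b) (hu : u a < u b) :
    len (u * swap a b) = len u + 1 +
      2 * #{c | a < c ∧ c < b ∧ u a < u c ∧ u c < u b} := by
  set D : Fin n → Fin n → ℤ := fun i j =>
    (if i < j ∧ u (swap a b j) < u (swap a b i) then 1 else 0) -
      if i < j ∧ u j < u i then 1 else 0 with hD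
  have hdiff : (len (u * swap a b) : ℤ) - len u = ∑ i, ∑ j, D i j := by
    rw [len_eq_sum, len_eq_sum]
    simp only [hD, ← sum_sub_distrib, Perm.mul_apply]
    rfl
  have hpair : D a a + D a b + D b a + D b b = 1 := by
    simp [hD, hab, hu, hab.not_gt, hu.not_gt]
  -- Only pairs meeting `{a, b}` change inversion status; the four pairs through a third `c`
  -- contribute `2` when `c` lies in the middle and `0` otherwise.
  have hpoint : ∀ c ∈ ({a, b} : Finset (Fin n))ᶜ, D a c + D c a + D b c + D c b =
      2 * if a < c ∧ c < b ∧ u a < u c ∧ u c < u b then 1 else 0 := by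
    intro c hc
    simp only [mem_compl, mem_insert, mem_singleton, not_or] at hc
    have hua := u.injective.ne hc.1
    have hub := u.injective.ne hc.2
    simp only [hD, swap_apply_left, swap_apply_right, swap_apply_of_ne_of_ne hc.1 hc.2]
    simp only [Fin.lt_def, ne_eq, Fin.ext_iff] at hab hu hc hua hub ⊢
    split_ifs <;> omega
  have hmiddle : ∑ c ∈ ({a, b} : Finset (Fin n))ᶜ,
      (if a < c ∧ c < b ∧ u a < u c ∧ u c < u b then 1 else 0 : ℤ) =
      #{c | a < c ∧ c < b ∧ u a < u c ∧ u c < u b} := by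
    rw [natCast_card_filter, ← sum_compl_add_sum {a, b}, sum_pair hab.ne]
    simp
  rw [sum_sum_eq_of_eq_zero_off_pair hab.ne, hpair, sum_congr rfl hpoint, ← mul_sum, hmiddle]
    at hdiff
  · omega
  · intro i j hia hib hja hjb
    simp [hD, swap_apply_of_ne_of_ne hia hib, swap_apply_of_ne_of_ne hja hjb]

theorem bruhatCover_iff : BruhatCover u v ↔
    ∃ a b : Fin n, a < b ∧ u a < u b ∧ v = u * swap a b ∧
      ∀ c, a < c → c < b → ¬(u a < u c ∧ u c < u b) := by
  constructor
  · rintro ⟨⟨i, j, hij, hv⟩, hlen⟩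
    obtain ⟨a, b, hab, rfl⟩ : ∃ a b : Fin n, a < b ∧ v = u * swap a b := by
      rcases hij.lt_or_gt with h | h
      · exact ⟨i, j, h, hv⟩
      · exact ⟨j, i, h, by rw [hv, swap_comm]⟩
    rcases (u.injective.ne hab.ne).lt_or_gt with hu | hu
    · refine ⟨a, b, hab, hu, rfl, fun c hac hcb hc => ?_⟩
      have hempty : #{c | a < c ∧ c < b ∧ u a < u c ∧ u c < u b} = 0 := by
        have := len_mul_swap u hab hu
        omega
      rw [card_eq_zero, filter_eq_empty_iff] at hempty
      exact hempty (mem_univ c) ⟨hac, hcb, hc⟩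
    · -- `u` is itself obtained from `u * swap a b` by a length-increasing swap
      have hu' : (u * swap a b) a < (u * swap a b) b := by simpa using hu
      have := len_mul_swap (u * swap a b) hab hu'
      rw [mul_swap_mul_self] at this
      omega
  · rintro ⟨a, b, hab, hu, rfl, hno⟩
    refine ⟨⟨a, b, hab.ne, rfl⟩, ?_⟩
    have hempty : #{c | a < c ∧ c < b ∧ u a < u c ∧ u c < u b} = 0 := by
      rw [card_eq_zero, filter_eq_empty_iff]
      exact fun c _ ⟨hac, hcb, hc⟩ => hno c hac hcb hc
    rw [len_mul_swap u hab hu, hempty, mul_zero, add_zero]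

lemma kImage_mul_swap_eq_iff (k : ℕ) (u : Perm (Fin n)) (a b : Fin n) :
    kImage k (u * swap a b) = kImage k u ↔ (a.val < k ↔ b.val < k) := by
  set S : Finset (Fin n) := {i | i.val < k}
  have himage : kImage k (u * swap a b) = (S.image (swap a b)).image u := by
    rw [kImage, image_image]
    rfl
  rw [himage, kImage, (image_injective u.injective).eq_iff]
  constructor
  · intro h
    have h' : S.image (swap a b) = S := h
    have hmem : ∀ x, x ∈ S → swap a b x ∈ S := fun x hx => h' ▸ mem_image_of_mem _ hx
    simp only [S, mem_filter, mem_univ, true_and] at hmem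
    exact ⟨fun ha => by simpa using hmem a ha, fun hb => by simpa using hmem b hb⟩
  · intro h
    refine eq_of_subset_of_card_le (fun x hx => ?_) (card_image_of_injective _ (swap a b).injective).ge
    obtain ⟨y, hy, rfl⟩ := mem_image.mp hx
    simp only [S, mem_filter, mem_univ, true_and] at hy ⊢
    rcases eq_or_ne y a with rfl | hya
    · simpa using h.mp hy
    rcases eq_or_ne y b with rfl | hyb
    · simpa using h.mpr hy
    · rwa [swap_apply_of_ne_of_ne hya hyb]

lemma kBruhatCover_mul_swap {a b : Fin n} (hak : a.val < k)
    (hbk : k ≤ b.val) (hu : u a < u b) (hno : ∀ c, a < c → c < b → ¬(u a < u c ∧ u c < u b)) :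
    KBruhatCover k u (u * swap a b) := by
  refine ⟨bruhatCover_iff.mpr ⟨a, b, Fin.lt_def.mpr (by omega), hu, rfl, hno⟩, fun he => ?_⟩
  have := (kImage_mul_swap_eq_iff k u a b).mp he.symm
  omega

lemma Fin.perm_eq_of_forall_apply_le (h : ∀ x, w x ≤ u x) : w = u := by
  have hsum : ∑ x, (w x : ℕ) = ∑ x, (u x : ℕ) := by
    rw [Equiv.sum_comp w (fun x : Fin n => (x : ℕ)), Equiv.sum_comp u (fun x : Fin n => (x : ℕ))]
  have heq := (sum_eq_sum_iff_of_le fun x _ => Fin.le_def.mp (h x)).mp hsum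
  ext x
  exact heq x (mem_univ x)

structure KBruhatCriterion (k : ℕ) (u w : Perm (Fin n)) : Prop where
  le_left : ∀ a : Fin n, a.val < k → u a ≤ w a
  ge_right : ∀ b : Fin n, k ≤ b.val → w b ≤ u b
  crossing : ∀ a b : Fin n, a < b → u a < u b → w b < w a → a.val < k ∧ k ≤ b.val

namespace KBruhatCriterion

lemma refl (k : ℕ) (u : Perm (Fin n)) : KBruhatCriterion k u u :=
  ⟨fun _ _ => le_rfl, fun _ _ => le_rfl, fun _ _ _ h h' => absurd h h'.asymm⟩

lemma trans (huv : KBruhatCriterion k u v) (hvw : KBruhatCriterion k v w) :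
    KBruhatCriterion k u w where
  le_left a ha := (huv.le_left a ha).trans (hvw.le_left a ha)
  ge_right b hb := (hvw.ge_right b hb).trans (huv.ge_right b hb)
  crossing a b hab hu hw := by
    rcases (v.injective.ne hab.ne).lt_or_gt with hv | hv
    · exact hvw.crossing a b hab hv hw
    · exact huv.crossing a b hab hu hv

end KBruhatCriterion

lemma kBruhatCriterion_mul_swap {a b : Fin n} (hak : a.val < k)
    (hbk : k ≤ b.val) (hu : u a < u b) (hno : ∀ c, a < c → c < b → ¬(u a < u c ∧ u c < u b)) :
    KBruhatCriterion k u (u * swap a b) := by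
  -- In `crossing`, `hno` handles the pairs `(a, c)` and `(c, b)` with `a < c < b`.
  refine ⟨fun x hx => ?_, fun x hx => ?_, fun x y hxy h1 h2 => ?_⟩
  · simp only [Perm.mul_apply, swap_apply_def]
    grind
  · simp only [Perm.mul_apply, swap_apply_def]
    grind
  · simp only [Perm.mul_apply, swap_apply_def] at h2
    grind

lemma KBruhatCover.kBruhatCriterion (h : KBruhatCover k u v) :
    KBruhatCriterion k u v := by
  obtain ⟨hcov, himage⟩ := h
  obtain ⟨a, b, hab, hu, rfl, hno⟩ := bruhatCover_iff.mp hcov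
  have hside : a.val < k ∧ k ≤ b.val := by
    by_contra hside
    refine himage ((kImage_mul_swap_eq_iff k u a b).mpr ?_).symm
    have := Fin.lt_def.mp hab
    omega
  exact kBruhatCriterion_mul_swap hside.1 hside.2 hu hno

lemma KBruhatLE.kBruhatCriterion (h : KBruhatLE k u w) :
    KBruhatCriterion k u w := by
  induction h with
  | refl => exact .refl k u
  | tail _ hcov ih => exact ih.trans hcov.kBruhatCriterion

namespace KBruhatCriterion

lemma mul_swap (h : KBruhatCriterion k u w) {a b : Fin n} (hak : a.val < k) (hbk : k ≤ b.val)
    (hu : u a < u b) (hbw : u b ≤ w a) (hwb : w b ≤ u a)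
    (hfix : ∀ c, u a < u c → u c < u b → w c = u c) :
    KBruhatCriterion k (u * swap a b) w := by
  have hab : a < b := Fin.lt_def.mpr (by omega)
  have hva : (u * swap a b) a = u b := by simp
  have hvb : (u * swap a b) b = u a := by simp
  have hv : ∀ x, x ≠ a → x ≠ b → (u * swap a b) x = u x := fun x hxa hxb => by
    simp [swap_apply_of_ne_of_ne hxa hxb]
  refine ⟨fun x hx => ?_, fun x hx => ?_, fun x y hxy h1 h2 => ?_⟩
  · rcases eq_or_ne x a with rfl | hxa
    · rwa [hva]
    · rw [hv x hxa (by rintro rfl; omega)]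
      exact h.le_left x hx
  · rcases eq_or_ne x b with rfl | hxb
    · rwa [hvb]
    · rw [hv x (by rintro rfl; omega) hxb]
      exact h.ge_right x hx
  rcases eq_or_ne x a with rfl | hxa
  · rcases eq_or_ne y b with rfl | hyb
    · exact ⟨hak, hbk⟩
    rw [hva, hv y hxy.ne' hyb] at h1
    exact h.crossing x y hxy (hu.trans h1) h2
  rcases eq_or_ne x b with rfl | hxb
  · rw [hvb, hv y (hab.trans hxy).ne' hxy.ne'] at h1
    rcases (u.injective.ne hxy.ne').lt_or_gt with hyx | hxy'
    · exact absurd (hwb.trans_lt (h1.trans_eq (hfix y h1 hyx).symm)) h2.not_gt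
    · exact absurd (h.crossing x y hxy hxy' h2).1 (by omega)
  rcases eq_or_ne y a with rfl | hya
  · rw [hva, hv x hxa hxb] at h1
    rcases (u.injective.ne hxy.ne).lt_or_gt with hxy' | hyx
    · exact absurd (h.crossing x y hxy hxy' h2).2 (by omega)
    · exact absurd h2 ((hfix x hyx h1 ▸ h1.trans_le hbw).not_gt)
  rcases eq_or_ne y b with rfl | hyb
  · rw [hvb, hv x hxa hxb] at h1
    exact h.crossing x y hxy (h1.trans hu) h2
  rw [hv x hxa hxb, hv y hya hyb] at h1
  exact h.crossing x y hxy h1 h2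

lemma not_between (h : KBruhatCriterion k u w) {a b : Fin n} (hbw : u b ≤ w a) (hwb : w b ≤ u a)
    (hfix : ∀ c, u a < u c → u c < u b → w c = u c) :
    ∀ c, a < c → c < b → ¬(u a < u c ∧ u c < u b) := by
  rintro c hac hcb ⟨hac', hcb'⟩
  have hc := hfix c hac' hcb'
  have hleft := h.crossing a c hac hac' (hc ▸ hcb'.trans_le hbw)
  have hright := h.crossing c b hcb hcb' (hwb.trans_lt (hc ▸ hac'))
  omega

lemma exists_rise (h : KBruhatCriterion k u w) (hne : u ≠ w) :
    ∃ a : Fin n, a.val < k ∧ u a < w a := by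
  by_contra! hno
  refine hne (Fin.perm_eq_of_forall_apply_le fun x => ?_).symm
  by_cases hx : x.val < k
  · exact hno x hx
  · exact h.ge_right x (not_lt.mp hx)

lemma exists_swap (h : KBruhatCriterion k u w) (hne : u ≠ w) :
    ∃ a b : Fin n, a.val < k ∧ k ≤ b.val ∧ u a < u b ∧ u b ≤ w a ∧ w b ≤ u a ∧
      ∀ c, u a < u c → u c < u b → w c = u c := by
  obtain ⟨a₀, ha₀⟩ := h.exists_rise hne
  obtain ⟨a, ha, hmax⟩ := exists_max_image {x | x.val < k ∧ u x < w x} u ⟨a₀, by simpa using ha₀⟩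
  simp only [mem_filter, mem_univ, true_and] at ha hmax
  obtain ⟨hak, haw⟩ := ha
  have hleft : ∀ c, c.val < k → u a < u c → w c = u c := fun c hck hac =>
    ((h.le_left c hck).eq_or_lt.resolve_right fun hlt => (hmax c ⟨hck, hlt⟩).not_gt hac).symm
  have hb₀ : ∃ c, k ≤ c.val ∧ u a < u c ∧ u c ≤ w a ∧ w c < u c := by
    set c := u.symm (w a)
    have huc : u c = w a := u.apply_symm_apply _
    have hca : c ≠ a := by
      rintro hca
      rw [hca] at huc
      exact haw.ne huc
    have hck : k ≤ c.val := by
      by_contra! hck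
      exact hca (w.injective (by rw [hleft c hck (huc ▸ haw), huc]))
    refine ⟨c, hck, huc ▸ haw, huc.le, (h.ge_right c hck).lt_of_ne fun hwc => hca ?_⟩
    exact w.injective (hwc.trans huc)
  obtain ⟨b, hb, hmin⟩ := exists_min_image {y | k ≤ y.val ∧ u a < u y ∧ u y ≤ w a ∧ w y < u y} u
    (by obtain ⟨c, hc⟩ := hb₀; exact ⟨c, by simpa using hc⟩)
  simp only [mem_filter, mem_univ, true_and] at hb hmin
  obtain ⟨hbk, hab, hbw, hwb⟩ := hb
  have hfix : ∀ c, u a < u c → u c < u b → w c = u c := by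
    intro c hac hcb
    by_cases hck : c.val < k
    · exact hleft c hck hac
    · rw [not_lt] at hck
      refine (h.ge_right c hck).eq_or_lt.resolve_right fun hlt => ?_
      exact (hmin c ⟨hck, hac, hcb.le.trans hbw, hlt⟩).not_gt hcb
  refine ⟨a, b, hak, hbk, hab, hbw, not_lt.mp fun hwb' => ?_, hfix⟩
  set c := u.symm (w b)
  have huc : u c = w b := u.apply_symm_apply _
  have hcb : c = b := w.injective ((hfix c (huc ▸ hwb') (huc ▸ hwb)).trans huc)
  rw [hcb] at huc
  exact hwb.ne' huc

end KBruhatCriterion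

def footrule (u w : Perm (Fin n)) : ℕ :=
  ∑ x, Nat.dist (u x) (w x)

lemma footrule_mul_swap_lt {a b : Fin n} (hu : u a < u b)
    (hbw : u b ≤ w a) (hwb : w b ≤ u a) :
    footrule (u * swap a b) w < footrule u w := by
  rw [Fin.lt_def] at hu
  rw [Fin.le_def] at hbw hwb
  refine sum_lt_sum (fun x _ => ?_) ⟨a, mem_univ a, ?_⟩
  · rcases eq_or_ne x a with rfl | hxa
    · simp only [Perm.mul_apply, swap_apply_left, Nat.dist]
      omega
    rcases eq_or_ne x b with rfl | hxb
    · simp only [Perm.mul_apply, swap_apply_right, Nat.dist]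
      omega
    · simp [swap_apply_of_ne_of_ne hxa hxb]
  · simp only [Perm.mul_apply, swap_apply_left, Nat.dist]
    omega

lemma KBruhatCriterion.kBruhatLE (h : KBruhatCriterion k u w) :
    KBruhatLE k u w := by
  induction hd : footrule u w using Nat.strong_induction_on generalizing u with
  | _ d ih =>
  by_cases hne : u = w
  · exact hne ▸ .refl
  obtain ⟨a, b, hak, hbk, hu, hbw, hwb, hfix⟩ := h.exists_swap hne
  have hcov := kBruhatCover_mul_swap hak hbk hu (h.not_between hbw hwb hfix)
  exact .head hcov (ih _ (hd ▸ footrule_mul_swap_lt hu hbw hwb)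
    (h.mul_swap hak hbk hu hbw hwb hfix) rfl)

end

theorem kBruhat_iff_general {n k : ℕ} (u w : Equiv.Perm (Fin n)) :
    KBruhatLE k u w ↔
      ((∀ a : Fin n, a.val < k → u a ≤ w a) ∧
       (∀ b : Fin n, k ≤ b.val → w b ≤ u b) ∧
       (∀ a b : Fin n, a < b → u a < u b → w b < w a → a.val < k ∧ k ≤ b.val)) := by
  constructor
  · intro h
    obtain ⟨hleft, hright, hcrossing⟩ := h.kBruhatCriterion
    exact ⟨hleft, hright, hcrossing⟩
  · rintro ⟨hleft, hright, hcrossing⟩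
    exact KBruhatCriterion.kBruhatLE ⟨hleft, hright, hcrossing⟩

/-- Bergeron–Sottile criterion for comparison in the `k`-Bruhat order
(Theorem A of [BS98]). Positions are zero-indexed: `a ∈ {1,…,k}` becomes
`a.val < k` and `b ∈ {k+1,…,n}` becomes `k ≤ b.val`. -/
theorem kBruhat_iff {n k : ℕ} (hk1 : 1 ≤ k) (hkn : k < n) (u w : Equiv.Perm (Fin n)) :
    KBruhatLE k u w ↔
      ((∀ a : Fin n, a.val < k → u a ≤ w a) ∧
       (∀ b : Fin n, k ≤ b.val → w b ≤ u b) ∧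
       (∀ a b : Fin n, a < b → u a < u b → w b < w a → a.val < k ∧ k ≤ b.val)) :=
  kBruhat_iff_general u w
end

section
/- Let $u, w \in S_n$ with $u \le_k w$ in the $k$-Bruhat order. Then there exists $z \in S_k \times S_{n-k}$ such that $uz$ is anti-Grassmannian (decreasing on $\{1,\dots,k\}$ and on $\{k+1,\dots,n\}$), $uz \le_k wz$, and both factorizations $uz$ and $wz$ are length additive, i.e. $\ell(uz) = \ell(u)+\ell(z)$ and $\ell(wz) = \ell(w)+\ell(z)$. -/
/-!
Choose `z` in the Young subgroup maximising `ℓ(uz)`. Then `uz` is anti-Grassmannian: an ascent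
of `uz` inside a block is undone by a transposition of the Young subgroup, which increases length.

A `k`-cover `x ⋖ x·(p q)`, `p < q`, has `p` and `q` in different blocks, `x p < x q`, and no
position between `p` and `q` whose value lies between `x p` and `x q`; hence it keeps the
relative order of any two positions in the same block, and so does every `x ≥_k u`. The
inversions of `z` lie within blocks and are also inversions of `uz`, hence of `xz`; by
`ℓ(xz) + 2·#{inversions of z that are not inversions of xz} = ℓ(x) + ℓ(z)` the product `xz` is
length additive. So right multiplication by `z` shifts lengths by `ℓ(z)`, fixes `x({1,…,k})`, and
conjugates transpositions: it maps the chain of `k`-covers from `u` to `w` to one from `uz` to `wz`.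
-/

open Finset Equiv

variable {n : ℕ}

lemma Function.Injective.not_lt_iff {α β : Type*} [LinearOrder β] {f : α → β}
    (hf : Function.Injective f) {a b : α} (h : a ≠ b) : ¬ f a < f b ↔ f b < f a :=
  not_lt_iff_eq_or_lt.trans (or_iff_right (hf.ne h))

def invSet (u : Perm (Fin n)) : Finset (Fin n × Fin n) :=
  univ.filter fun e => e.1 < e.2 ∧ u e.2 < u e.1

@[simp] lemma mem_invSet {u : Perm (Fin n)} {e : Fin n × Fin n} :
    e ∈ invSet u ↔ e.1 < e.2 ∧ u e.2 < u e.1 := by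
  simp [invSet]

lemma len_eq_card_invSet (u : Perm (Fin n)) : len u = #(invSet u) := rfl

theorem len_mul_add_two_mul_card (u z : Perm (Fin n)) :
    len (u * z) + 2 * #{e ∈ invSet z | u (z e.1) < u (z e.2)} = len u + len z := by
  have hkept : #{e ∈ invSet (u * z) | z e.1 < z e.2} = #{c ∈ invSet u | z⁻¹ c.1 < z⁻¹ c.2} := by
    refine card_bij' (fun e _ => (z e.1, z e.2)) (fun c _ => (z⁻¹ c.1, z⁻¹ c.2)) ?_ ?_ ?_ ?_ <;>
      simp +contextual [and_comm]
  have hlost : {e ∈ invSet (u * z) | ¬ z e.1 < z e.2} =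
      {e ∈ invSet z | ¬ u (z e.1) < u (z e.2)} := by
    ext e
    simp only [mem_filter, mem_invSet, Perm.mul_apply]
    constructor <;> rintro ⟨⟨hlt, h⟩, h'⟩
    · have hz := (z.injective.not_lt_iff hlt.ne).1 h'
      exact ⟨⟨hlt, hz⟩, ((u.injective.comp z.injective).not_lt_iff hlt.ne).2 h⟩
    · exact ⟨⟨hlt, ((u.injective.comp z.injective).not_lt_iff hlt.ne).1 h'⟩, asymm h⟩
  have hcancel : #{c ∈ invSet u | ¬ z⁻¹ c.1 < z⁻¹ c.2} =
      #{e ∈ invSet z | u (z e.1) < u (z e.2)} := by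
    -- `(c₁, c₂) ↦ (z⁻¹ c₂, z⁻¹ c₁)`: an inversion of `u` whose order `z⁻¹` reverses comes from
    -- an inversion of `z` that `uz` puts back in order.
    refine card_bij' (fun c _ => (z⁻¹ c.2, z⁻¹ c.1)) (fun e _ => (z e.2, z e.1)) ?_ ?_ ?_ ?_
    · intro c hc
      simp only [mem_filter, mem_invSet, Perm.coe_inv, apply_symm_apply] at hc ⊢
      exact ⟨⟨(z.symm.injective.not_lt_iff hc.1.1.ne).1 hc.2, hc.1.1⟩, hc.1.2⟩
    · intro e he
      simp only [mem_filter, mem_invSet, Perm.coe_inv, symm_apply_apply] at he ⊢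
      exact ⟨⟨he.1.2, he.2⟩, asymm he.1.1⟩
    all_goals simp
  have huz := card_filter_add_card_filter_not (s := invSet (u * z)) fun e => z e.1 < z e.2
  have hu := card_filter_add_card_filter_not (s := invSet u) fun c => z⁻¹ c.1 < z⁻¹ c.2
  have hz := card_filter_add_card_filter_not (s := invSet z) fun e => u (z e.1) < u (z e.2)
  rw [hlost] at huz
  rw [len_eq_card_invSet, len_eq_card_invSet, len_eq_card_invSet]
  omega

lemma len_mul_of_forall {u z : Perm (Fin n)}
    (h : ∀ a b, a < b → z b < z a → u (z b) < u (z a)) :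
    len (u * z) = len u + len z := by
  have hempty : {e ∈ invSet z | u (z e.1) < u (z e.2)} = ∅ :=
    filter_eq_empty_iff.2 fun e he => asymm (h _ _ (mem_invSet.1 he).1 (mem_invSet.1 he).2)
  simpa [hempty] using len_mul_add_two_mul_card u z

lemma len_mul_swap_add_card (u : Perm (Fin n)) (p q : Fin n) :
    len (u * swap p q) + #{e ∈ invSet (swap p q) | u (swap p q e.1) < u (swap p q e.2)} =
      len u + #{e ∈ invSet (swap p q) | u e.1 < u e.2} := by
  have h₁ := len_mul_add_two_mul_card u (swap p q)
  have h₂ := len_mul_add_two_mul_card (u * swap p q) (swap p q)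
  simp only [mul_assoc, swap_mul_self, mul_one, Perm.mul_apply, swap_apply_self] at h₂
  omega

section Swap

variable {u : Perm (Fin n)} {p q : Fin n}

lemma filter_apply_swap_lt_subset (hpq : p < q) (hu : u p < u q) :
    {e ∈ invSet (swap p q) | u (swap p q e.1) < u (swap p q e.2)} ⊆
      ({e ∈ invSet (swap p q) | u e.1 < u e.2}).erase (p, q) := by
  rintro ⟨a, b⟩ he
  simp only [mem_filter, mem_invSet, mem_erase] at he ⊢
  obtain ⟨⟨hab, ht⟩, hut⟩ := he
  refine ⟨?_, ⟨hab, ht⟩, ?_⟩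
  · rintro ⟨rfl, rfl⟩
    simp only [swap_apply_left, swap_apply_right] at hut
    exact asymm hu hut
  · -- `(a, b)` is `(p, x)` or `(x, q)` with `p < x < q`; combine `u q < u x`, resp.
    -- `u x < u p`, with `u p < u q`.
    rw [swap_apply_def, swap_apply_def] at ht hut
    split_ifs at ht hut <;> grind

lemma len_lt_len_mul_swap (hpq : p < q) (hu : u p < u q) : len u < len (u * swap p q) := by
  have hmem : (p, q) ∈ {e ∈ invSet (swap p q) | u e.1 < u e.2} := by simp [hpq, hu]
  have hsub := card_le_card (filter_apply_swap_lt_subset hpq hu)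
  rw [card_erase_of_mem hmem] at hsub
  have := card_pos.2 ⟨_, hmem⟩
  have := len_mul_swap_add_card u p q
  omega

lemma apply_lt_of_len_mul_swap (hpq : p < q) (hu : u p < u q)
    (hlen : len (u * swap p q) = len u + 1) {x : Fin n} (hpx : p < x) (hxq : x < q)
    (hux : u p < u x) : u q < u x := by
  have hmem : (p, q) ∈ {e ∈ invSet (swap p q) | u e.1 < u e.2} := by simp [hpq, hu]
  have hsub := filter_apply_swap_lt_subset hpq hu
  have heq := eq_of_subset_of_card_le hsub (by
    have := len_mul_swap_add_card u p q
    rw [card_erase_of_mem hmem]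
    omega)
  have hpx_mem : (p, x) ∈ ({e ∈ invSet (swap p q) | u e.1 < u e.2}).erase (p, q) := by
    simp [hpx, hux, hxq, hxq.ne, swap_apply_of_ne_of_ne hpx.ne' hxq.ne]
  rw [← heq] at hpx_mem
  simpa [swap_apply_of_ne_of_ne hpx.ne' hxq.ne] using (mem_filter.1 hpx_mem).2

end Swap

theorem BruhatCover.exists_swap {u w : Perm (Fin n)} (h : BruhatCover u w) :
    ∃ p q, p < q ∧ w = u * swap p q ∧ u p < u q ∧
      ∀ x, p < x → x < q → u p < u x → u q < u x := by
  obtain ⟨⟨i, j, hij, rfl⟩, hlen⟩ := h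
  obtain ⟨p, q, hpq, hswap⟩ : ∃ p q, p < q ∧ swap i j = swap p q := by
    rcases hij.lt_or_gt with h | h
    exacts [⟨i, j, h, rfl⟩, ⟨j, i, h, swap_comm i j⟩]
  rw [hswap] at hlen ⊢
  have hu : u p < u q := by
    by_contra hnot
    have hw : (u * swap p q) p < (u * swap p q) q := by
      simpa using (u.injective.not_lt_iff hpq.ne).1 hnot
    have := len_lt_len_mul_swap hpq hw
    rw [mul_swap_mul_self] at this
    omega
  exact ⟨p, q, hpq, rfl, hu, fun x => apply_lt_of_len_mul_swap hpq hu hlen⟩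

def SameBlock (k : ℕ) (a b : Fin n) : Prop :=
  a.val < k ↔ b.val < k

section Young

variable {k : ℕ} {u z z' : Perm (Fin n)}

lemma isYoung_one (k : ℕ) : IsYoung k (1 : Perm (Fin n)) :=
  fun _ => Iff.rfl

lemma IsYoung.mul (hz : IsYoung k z) (hz' : IsYoung k z') : IsYoung k (z * z') :=
  fun i => (hz (z' i)).trans (hz' i)

lemma isYoung_swap {p q : Fin n} (h : SameBlock k p q) : IsYoung k (swap p q) := by
  intro i
  rcases eq_or_ne i p with rfl | hip
  · rw [swap_apply_left]; exact h.symm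
  rcases eq_or_ne i q with rfl | hiq
  · rw [swap_apply_right]; exact h
  · rw [swap_apply_of_ne_of_ne hip hiq]

lemma IsYoung.sameBlock_of_lt {a b : Fin n} (hz : IsYoung k z) (hab : a < b) (hzab : z b < z a) :
    SameBlock k a b := by
  have ha := hz a
  have hb := hz b
  rw [Fin.lt_def] at hab hzab
  unfold SameBlock
  omega

lemma kImage_mul_of_isYoung (hz : IsYoung k z) (u : Perm (Fin n)) :
    kImage k (u * z) = kImage k u := by
  ext y
  simp only [kImage, mem_image, mem_filter, mem_univ, true_and, Perm.mul_apply]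
  constructor
  · rintro ⟨i, hi, rfl⟩
    exact ⟨z i, (hz i).2 hi, rfl⟩
  · rintro ⟨i, hi, rfl⟩
    exact ⟨z.symm i, (hz (z.symm i)).1 (by rwa [apply_symm_apply]), by rw [apply_symm_apply]⟩

lemma antiGrass_iff : AntiGrass k u ↔ ∀ a b, a < b → SameBlock k a b → u b < u a := by
  unfold AntiGrass SameBlock
  constructor
  · rintro ⟨hlow, hhigh⟩ a b hab hs
    by_cases hb : b.val < k
    · exact hlow a b hab hb
    · exact hhigh a b hab (by omega)
  · intro h
    refine ⟨fun a b hab hb => h a b hab ?_, fun a b hab ha => h a b hab ?_⟩ <;>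
      rw [Fin.lt_def] at hab <;> omega

theorem exists_isYoung_antiGrass (k : ℕ) (u : Perm (Fin n)) :
    ∃ z, IsYoung k z ∧ AntiGrass k (u * z) := by
  classical
  obtain ⟨z, hz, hmax⟩ := exists_max_image ({z | IsYoung k z} : Finset (Perm (Fin n)))
    (fun z => len (u * z)) ⟨1, by simpa using isYoung_one k⟩
  simp only [mem_filter, mem_univ, true_and] at hz hmax
  refine ⟨z, hz, antiGrass_iff.2 fun a b hab hs => ?_⟩
  by_contra hnot
  have hlt := len_lt_len_mul_swap hab (((u * z).injective.not_lt_iff hab.ne').1 hnot)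
  have hle := hmax (z * swap a b) (hz.mul (isYoung_swap hs))
  rw [← mul_assoc] at hle
  omega

end Young

section KBruhat

variable {k : ℕ} {u w x y z : Perm (Fin n)}

theorem KBruhatCover.exists_swap (h : KBruhatCover k u w) :
    ∃ p q, p < q ∧ w = u * swap p q ∧ u p < u q ∧
      (∀ x, p < x → x < q → u p < u x → u q < u x) ∧ p.val < k ∧ k ≤ q.val := by
  obtain ⟨hcov, hk⟩ := h
  obtain ⟨p, q, hpq, rfl, hu, hmid⟩ := hcov.exists_swap
  have hblock : ¬ SameBlock k p q := fun hs => hk (kImage_mul_of_isYoung (isYoung_swap hs) u).symm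
  refine ⟨p, q, hpq, rfl, hu, hmid, ?_⟩
  unfold SameBlock at hblock
  rw [Fin.lt_def] at hpq
  omega

theorem KBruhatCover.apply_lt_apply (h : KBruhatCover k u w) {c d : Fin n} (hcd : c < d)
    (hs : SameBlock k c d) (hu : u c < u d) : w c < w d := by
  obtain ⟨p, q, hpq, rfl, hupq, hmid, hp, hq⟩ := h.exists_swap
  unfold SameBlock at hs
  simp only [Perm.mul_apply, swap_apply_def]
  -- `c` and `d` cannot be `p` and `q`; the cases `c = p` and `d = q` are settled by `hmid`.
  split_ifs <;> grind [apply_eq_iff_eq]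

theorem KBruhatLE.apply_lt_apply (h : KBruhatLE k u w) {c d : Fin n} (hcd : c < d)
    (hs : SameBlock k c d) (hu : u c < u d) : w c < w d := by
  induction h with
  | refl => exact hu
  | tail _ hcov ih => exact hcov.apply_lt_apply hcd hs ih

theorem len_mul_of_antiGrass (hz : IsYoung k z) (hAG : AntiGrass k (u * z))
    (hx : KBruhatLE k u x) : len (x * z) = len x + len z := by
  refine len_mul_of_forall fun a b hab hzab => ?_
  have hs := hz.sameBlock_of_lt hab hzab
  have hs' : SameBlock k (z b) (z a) := (hz b).trans (hs.symm.trans (hz a).symm)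
  exact hx.apply_lt_apply hzab hs' (antiGrass_iff.1 hAG a b hab hs)

theorem KBruhatCover.mul_right (h : KBruhatCover k x y) (hz : IsYoung k z)
    (hx : len (x * z) = len x + len z) (hy : len (y * z) = len y + len z) :
    KBruhatCover k (x * z) (y * z) := by
  obtain ⟨⟨⟨i, j, hij, rfl⟩, hlen⟩, hk⟩ := h
  refine ⟨⟨⟨z⁻¹ i, z⁻¹ j, by simpa using hij, ?_⟩, by omega⟩, ?_⟩
  · rw [swap_apply_apply, inv_inv]
    group
  · rwa [kImage_mul_of_isYoung hz, kImage_mul_of_isYoung hz]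

theorem KBruhatLE.mul_right_of_antiGrass (hz : IsYoung k z) (hAG : AntiGrass k (u * z))
    (h : KBruhatLE k u w) : KBruhatLE k (u * z) (w * z) := by
  induction h with
  | refl => exact .refl
  | tail hux hxy ih =>
    exact ih.tail <| hxy.mul_right hz (len_mul_of_antiGrass hz hAG hux)
      (len_mul_of_antiGrass hz hAG (hux.tail hxy))

end KBruhat

theorem exists_antiGrass_rep_general {n k : ℕ} (u w : Equiv.Perm (Fin n))
    (h : KBruhatLE k u w) :
    ∃ z : Equiv.Perm (Fin n), IsYoung k z ∧ AntiGrass k (u * z) ∧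
      KBruhatLE k (u * z) (w * z) ∧
      len (u * z) = len u + len z ∧ len (w * z) = len w + len z := by
  obtain ⟨z, hz, hAG⟩ := exists_isYoung_antiGrass k u
  exact ⟨z, hz, hAG, h.mul_right_of_antiGrass hz hAG, len_mul_of_antiGrass hz hAG .refl,
    len_mul_of_antiGrass hz hAG h⟩

/-- Lemma: if `u ≤_k w` then there is `z ∈ S_k × S_{n-k}` such that `uz` is
anti-Grassmannian, `uz ≤_k wz`, and both factorizations are length additive. -/
theorem exists_antiGrass_rep {n k : ℕ} (hk : k ≤ n) (u w : Equiv.Perm (Fin n))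
    (h : KBruhatLE k u w) :
    ∃ z : Equiv.Perm (Fin n), IsYoung k z ∧ AntiGrass k (u * z) ∧
      KBruhatLE k (u * z) (w * z) ∧
      len (u * z) = len u + len z ∧ len (w * z) = len w + len z :=
  exists_antiGrass_rep_general u w h
end

section
/- Let $u \in S_n$ be decreasing on $\{1,\dots,k\}$ and on $\{k+1,\dots,n\}$, and suppose $u \le w$ in strong Bruhat order. Then $u(a) \le w(a)$ for all $a \le k$, and $u(a) \ge w(a)$ for all $a > k$. -/
open Finset Equiv

section

variable {n : ℕ}

lemma apply_lt_apply_of_swap_reverses {u : Perm (Fin n)} {i j p q : Fin n}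
    (hij : i < j) (hu : u j < u i) (hpq : p < q)
    (hrev : swap i j q < swap i j p) (hinv : u (swap i j q) < u (swap i j p)) :
    u q < u p := by
  simp only [swap_apply_def] at hrev hinv
  split_ifs at hrev hinv <;> subst_vars <;> omega

lemma len_mul_swap_le {u : Perm (Fin n)} {i j : Fin n} (hij : i < j) (hu : u j < u i) :
    len (u * swap i j) ≤ len u := by
  -- Relabel an inversion of `u·(i j)` by `(i j)` unless that would break the order of the pair.
  let f : Fin n × Fin n → Fin n × Fin n := fun x =>
    if swap i j x.1 < swap i j x.2 then (swap i j x.1, swap i j x.2) else x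
  unfold len
  refine card_le_card_of_injOn f ?_ ?_
  · intro x hx
    rw [mem_coe, mem_filter] at hx ⊢
    simp only [mem_univ, true_and, Perm.mul_apply] at hx ⊢
    unfold f
    split_ifs with hlt
    · exact ⟨hlt, hx.2⟩
    · have hrev : swap i j x.2 < swap i j x.1 :=
        (not_lt.1 hlt).lt_of_ne ((swap i j).injective.ne hx.1.ne')
      exact ⟨hx.1, apply_lt_apply_of_swap_reverses hij hu hx.1 hrev hx.2⟩
  · intro x hx y hy hxy
    rw [mem_coe, mem_filter] at hx hy
    simp only [mem_univ, true_and, Perm.mul_apply] at hx hy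
    unfold f at hxy
    split_ifs at hxy with h1 h2 h2
    · simpa [Prod.ext_iff] using hxy
    · subst hxy
      simp only [swap_apply_self] at h2
      exact absurd hx.1 h2
    · subst hxy
      simp only [swap_apply_self] at h1
      exact absurd hy.1 h1
    · exact hxy

lemma BruhatCover.exists_lt_lt_eq_mul_swap {u w : Perm (Fin n)} (h : BruhatCover u w) :
    ∃ i j, i < j ∧ u i < u j ∧ w = u * swap i j := by
  obtain ⟨⟨i, j, hne, rfl⟩, hlen⟩ := h
  wlog hij : i < j generalizing i j
  · rw [swap_comm] at hlen ⊢
    exact this j i hne.symm hlen (hne.lt_or_gt.resolve_left hij)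
  refine ⟨i, j, hij, lt_of_not_ge fun hji => ?_, rfl⟩
  have := len_mul_swap_le hij (hji.lt_of_ne (u.injective.ne hne.symm))
  omega

lemma BruhatCover.card_filter_le_of_isLowerSet {u w : Perm (Fin n)} (h : BruhatCover u w)
    {s : Finset (Fin n)} (hs : IsLowerSet (s : Set (Fin n))) (t : Fin n) :
    #{p ∈ s | t ≤ u p} ≤ #{p ∈ s | t ≤ w p} := by
  obtain ⟨i, j, hij, hu, rfl⟩ := h.exists_lt_lt_eq_mul_swap
  -- A position `j` that drops out of the count is replaced by `i ∈ s`, which now carries `u j`.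
  refine card_le_card_of_injOn (fun p => if p = j ∧ ¬ t ≤ u i then i else p) ?_ ?_
  · intro p hp
    rw [mem_coe, mem_filter] at hp ⊢
    simp only [Perm.mul_apply]
    split_ifs with hb
    · obtain ⟨rfl, -⟩ := hb
      exact ⟨hs hij.le hp.1, by rw [swap_apply_left]; exact hp.2⟩
    · refine ⟨hp.1, ?_⟩
      rw [swap_apply_def]
      split_ifs <;> grind
  · intro p hp q hq hpq
    rw [mem_coe, mem_filter] at hp hq
    dsimp only at hpq
    split_ifs at hpq <;> grind

lemma BruhatLE.card_filter_le_of_isLowerSet {u w : Perm (Fin n)} (h : BruhatLE u w)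
    {s : Finset (Fin n)} (hs : IsLowerSet (s : Set (Fin n))) (t : Fin n) :
    #{p ∈ s | t ≤ u p} ≤ #{p ∈ s | t ≤ w p} := by
  induction h with
  | refl => exact le_rfl
  | tail _ hc ih => exact ih.trans (hc.card_filter_le_of_isLowerSet hs t)

lemma Equiv.Perm.card_filter_le_apply_add_card_filter_compl (v : Perm (Fin n))
    (s : Finset (Fin n)) (t : Fin n) :
    #{p ∈ s | t ≤ v p} + #{p ∈ sᶜ | t ≤ v p} = #{p | t ≤ p} := by
  rw [← card_union_of_disjoint (disjoint_filter_filter disjoint_compl_right), ← filter_union,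
    union_compl]
  exact card_bijective v v.bijective (by simp)

lemma BruhatLE.card_filter_le_of_isUpperSet {u w : Perm (Fin n)} (h : BruhatLE u w)
    {s : Finset (Fin n)} (hs : IsUpperSet (s : Set (Fin n))) (t : Fin n) :
    #{p ∈ s | t ≤ w p} ≤ #{p ∈ s | t ≤ u p} := by
  have hsc : IsLowerSet ((sᶜ : Finset (Fin n)) : Set (Fin n)) := by
    rw [coe_compl]
    exact hs.compl
  have := h.card_filter_le_of_isLowerSet hsc t
  have hu := Perm.card_filter_le_apply_add_card_filter_compl u s t
  have hw := Perm.card_filter_le_apply_add_card_filter_compl w s t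
  omega

lemma AntiGrass.strictAntiOn_lt {k : ℕ} {u : Perm (Fin n)} (hu : AntiGrass k u) :
    StrictAntiOn u {a | a.val < k} :=
  fun _ _ _ hb hab => hu.1 _ _ hab hb

lemma AntiGrass.strictAntiOn_ge {k : ℕ} {u : Perm (Fin n)} (hu : AntiGrass k u) :
    StrictAntiOn u {a | k ≤ a.val} :=
  fun _ ha _ _ hab => hu.2 _ _ hab ha

end

theorem antiGrass_bruhat_le_values_general {n k : ℕ} (u w : Equiv.Perm (Fin n))
    (hAG : AntiGrass k u) (h : BruhatLE u w) :
    (∀ a : Fin n, a.val < k → u a ≤ w a) ∧ (∀ a : Fin n, k ≤ a.val → w a ≤ u a) := by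
  refine ⟨fun a ha => ?_, fun a ha => ?_⟩
  · have hu : ∀ p ∈ Iic a, u a ≤ u p := fun p hp =>
      have hpa : p ≤ a := mem_Iic.1 hp
      hAG.strictAntiOn_lt.antitoneOn (lt_of_le_of_lt (Fin.le_def.1 hpa) ha) ha hpa
    have hcount :=
      h.card_filter_le_of_isLowerSet (s := Iic a) (by simpa using isLowerSet_Iic a) (u a)
    rw [card_filter_eq_iff.2 hu] at hcount
    exact card_filter_eq_iff.1 ((card_filter_le _ _).antisymm hcount) a (mem_Iic.2 le_rfl)
  · obtain ⟨p, hp⟩ : ({p ∈ Ici a | w a ≤ u p} : Finset (Fin n)).Nonempty := by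
      rw [← card_pos]
      have hwa : 0 < #{p ∈ Ici a | w a ≤ w p} := card_pos.2 ⟨a, by simp⟩
      exact hwa.trans_le (h.card_filter_le_of_isUpperSet (by simpa using isUpperSet_Ici a) _)
    rw [mem_filter, mem_Ici] at hp
    exact hp.2.trans (hAG.strictAntiOn_ge.antitoneOn ha (ha.trans hp.1) hp.1)

/-- If `u` is decreasing on `{1,…,k}` and on `{k+1,…,n}` and `u ≤ w` in strong
Bruhat order, then `u(a) ≤ w(a)` for `a ≤ k` and `u(a) ≥ w(a)` for `a > k`. -/
theorem antiGrass_bruhat_le_values {n k : ℕ} (hk : k ≤ n) (u w : Equiv.Perm (Fin n))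
    (hAG : AntiGrass k u) (h : BruhatLE u w) :
    (∀ a : Fin n, a.val < k → u a ≤ w a) ∧ (∀ a : Fin n, k ≤ a.val → w a ≤ u a) :=
  antiGrass_bruhat_le_values_general u w hAG h
end

section
/- Let $w \in S_n$, let $\mathbf{w} = s_{i_1}\cdots s_{i_m}$ be a reduced word for $w$, and let $u \le w$. Then there exists a unique positive distinguished subexpression (PDS) for $u$ in $\mathbf{w}$. -/
/-- The simple transposition `s_i` swapping the (zero-indexed) positions `i`
and `i+1`; junk value `1` when `i+1 ≥ n`. -/
def simpleRefl {n : ℕ} (i : ℕ) : Equiv.Perm (Fin n) :=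
  if h : i + 1 < n then Equiv.swap ⟨i, Nat.lt_of_succ_lt h⟩ ⟨i + 1, h⟩ else 1

/-- The product of the word of simple reflections `s_{i_1} ⋯ s_{i_m}` given by
the list `l = [i_1, …, i_m]`. -/
def wordProd {n : ℕ} (l : List ℕ) : Equiv.Perm (Fin n) :=
  (l.map (simpleRefl (n := n))).prod

/-- The product of the subexpression of the word `l` selected by the Boolean
mask `m`: omitted factors are replaced by the identity. -/
def maskProd {n : ℕ} (l : List ℕ) (m : List Bool) : Equiv.Perm (Fin n) :=
  ((l.zip m).map fun p => if p.2 then simpleRefl (n := n) p.1 else 1).prod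

/-- The mask `m` defines a positive distinguished subexpression of the word `l`:
for every position `j`, writing `u_{(j)}` for the product of the first `j`
factors of the subexpression, one has `u_{(j-1)} < u_{(j-1)}·s_{i_j}` in Bruhat
order, i.e. right multiplication by `s_{i_j}` increases length.  (Combined with
distinguishedness `u_{(j)} ≤ u_{(j-1)} s_{i_j}`, which then holds automatically,
this is exactly the definition of a PDS.) -/
def IsPDS {n : ℕ} (l : List ℕ) (m : List Bool) : Prop :=
  m.length = l.length ∧
  ∀ j : ℕ, j < l.length →
    len ((maskProd (n := n) (l.take j) (m.take j)) * simpleRefl (l.getD j 0)) =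
      len (maskProd (n := n) (l.take j) (m.take j)) + 1

/-! For any word `l`, the set of products of subexpressions of `l` is a lower ideal in Bruhat
order. Indeed, if `x` is such a product and `x b < x a` with `a < b`, then reading the
subexpression from the right, some letter `s_i` is the first to create the inversion; that letter
is the swap of the current values at `a` and `b`, and deleting it yields `x · (a b)` (strong
exchange). Bruhat covers go down by exactly such a transposition, and the length of a permutation
goes up under `x ↦ x · (a b)` when `x a < x b`.

A PDS is forced from the right: the last letter `s_i` is used iff `u s_i < u`, and what remains
to be expressed by the shorter word is whichever of `u`, `u s_i` is shorter. It is a subexpression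
product of the shorter word because the ideal is closed under removing a right descent. -/

open Equiv

variable {n : ℕ}

theorem swap_lt_swap_of_adjacent {a b x y : Fin n} (hab : b.val = a.val + 1) (hxy : x < y)
    (hne : (x, y) ≠ (a, b)) : swap a b x < swap a b y := by
  simp only [ne_eq, Prod.mk.injEq] at hne
  rw [Fin.lt_def] at hxy ⊢
  simp only [swap_apply_def]
  split_ifs <;> simp_all [Fin.ext_iff] <;> omega

theorem len_mul_swap_of_adjacent {u : Perm (Fin n)} {a b : Fin n} (hab : b.val = a.val + 1)
    (hu : u a < u b) : len (u * swap a b) = len u + 1 := by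
  have hlt : a < b := by rw [Fin.lt_def]; omega
  have key : (Finset.univ.filter fun p : Fin n × Fin n =>
        p.1 < p.2 ∧ (u * swap a b) p.2 < (u * swap a b) p.1) =
      insert (a, b) ((Finset.univ.filter fun p : Fin n × Fin n => p.1 < p.2 ∧ u p.2 < u p.1).map
        ((swap a b).prodCongr (swap a b)).toEmbedding) := by
    ext ⟨p, q⟩
    rw [Finset.mem_insert, Finset.mem_map_equiv, Finset.mem_filter, Finset.mem_filter]
    simp only [Finset.mem_univ, true_and, prodCongr_symm, symm_swap, prodCongr_apply, Prod.map,
      Perm.mul_apply]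
    by_cases hpq : (p, q) = (a, b)
    · simp only [Prod.mk.injEq] at hpq
      obtain ⟨rfl, rfl⟩ := hpq
      simpa [hlt] using hu
    · refine ⟨fun h => Or.inr ⟨swap_lt_swap_of_adjacent hab h.1 hpq, h.2⟩, ?_⟩
      rintro (h | ⟨h1, h2⟩)
      · exact absurd h hpq
      · refine ⟨?_, h2⟩
        have hne : (swap a b p, swap a b q) ≠ (a, b) := by
          rintro h
          simp only [Prod.mk.injEq] at h
          rw [h.1, h.2] at h2
          exact absurd hu (not_lt.2 (by simpa using h2.le))
        simpa using swap_lt_swap_of_adjacent hab h1 hne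
  have hnotMem : (a, b) ∉ (Finset.univ.filter fun p : Fin n × Fin n =>
      p.1 < p.2 ∧ u p.2 < u p.1).map ((swap a b).prodCongr (swap a b)).toEmbedding := by
    simp [Finset.mem_map_equiv, hlt.not_gt]
  rw [len, key, Finset.card_insert_of_notMem hnotMem, Finset.card_map, len]

theorem len_mul_swap_of_adjacent_of_gt {u : Perm (Fin n)} {a b : Fin n}
    (hab : b.val = a.val + 1) (hu : u b < u a) : len (u * swap a b) + 1 = len u := by
  have h := len_mul_swap_of_adjacent (u := u * swap a b) hab (by simpa using hu)
  rwa [mul_swap_mul_self, eq_comm] at h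

theorem len_mul_swap_eq_or_of_adjacent (u : Perm (Fin n)) {a b : Fin n}
    (hab : b.val = a.val + 1) : len (u * swap a b) = len u + 1 ∨ len (u * swap a b) + 1 = len u :=
  (lt_or_gt_of_ne (u.injective.ne (Fin.ne_of_val_ne (by omega) : a ≠ b))).imp
    (len_mul_swap_of_adjacent hab) (len_mul_swap_of_adjacent_of_gt hab)

theorem len_lt_len_mul_swap_s6 {u : Perm (Fin n)} {a b : Fin n} (hab : a < b) (hu : u a < u b) :
    len u < len (u * swap a b) := by
  obtain ⟨k, hk⟩ : ∃ k, b.val = a.val + k + 1 :=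
    ⟨b.val - a.val - 1, by rw [Fin.lt_def] at hab; omega⟩
  induction k generalizing u b with
  | zero => rw [len_mul_swap_of_adjacent hk hu]; omega
  | succ k ih =>
    -- conjugate by the adjacent swap `(c b)`, where `c = b - 1`
    set c : Fin n := ⟨a.val + k + 1, by omega⟩
    have hcb : b.val = c.val + 1 := by simp only [c]; omega
    have hac : a < c := by rw [Fin.lt_def]; simp only [c]; omega
    have hab' : a ≠ b := hab.ne
    have hcb' : c ≠ b := Fin.ne_of_val_ne (by omega)
    have hv : len (u * swap c b) < len (u * swap c b * swap a c) :=
      ih hac (by simpa [swap_apply_of_ne_of_ne hac.ne hab']) rfl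
    have hprod : u * swap a b = u * swap c b * swap a c * swap c b := by
      rw [swap_comm a b, ← swap_mul_swap_mul_swap hac.ne hab']
      simp only [mul_assoc]
    rw [hprod]
    rcases lt_or_gt_of_ne (u.injective.ne hcb') with h | h
    · have := len_mul_swap_of_adjacent hcb h
      have := len_mul_swap_eq_or_of_adjacent (u * swap c b * swap a c) hcb
      omega
    · have := len_mul_swap_of_adjacent_of_gt hcb h
      have hup : (u * swap c b * swap a c) c < (u * swap c b * swap a c) b := by
        simpa [swap_apply_of_ne_of_ne hac.ne hab', swap_apply_of_ne_of_ne hab'.symm hcb'.symm]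
          using hu.trans h
      rw [len_mul_swap_of_adjacent hcb hup]
      omega

theorem apply_lt_apply_of_len_mul_swap_lt {u : Perm (Fin n)} {a b : Fin n} (hab : a < b)
    (h : len (u * swap a b) < len u) : u b < u a := by
  by_contra! hu
  exact (len_lt_len_mul_swap_s6 hab (hu.lt_of_ne (u.injective.ne hab.ne))).not_gt h

theorem simpleRefl_of_lt {i : ℕ} (h : i + 1 < n) :
    simpleRefl (n := n) i = swap ⟨i, by omega⟩ ⟨i + 1, h⟩ := dif_pos h

theorem simpleRefl_of_not_lt {i : ℕ} (h : ¬i + 1 < n) : simpleRefl (n := n) i = 1 := dif_neg h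

@[simp]
theorem simpleRefl_mul_self (i : ℕ) : simpleRefl (n := n) i * simpleRefl i = 1 := by
  by_cases h : i + 1 < n
  · rw [simpleRefl_of_lt h, swap_mul_self]
  · rw [simpleRefl_of_not_lt h, mul_one]

theorem simpleRefl_eq_swap_of_lt {i : ℕ} {x y : Fin n} (hxy : x < y)
    (h : simpleRefl i y < simpleRefl i x) : simpleRefl i = swap x y := by
  by_cases hi : i + 1 < n
  · rw [simpleRefl_of_lt hi] at h ⊢
    by_contra hne
    refine (swap_lt_swap_of_adjacent rfl hxy ?_).not_gt h
    rintro ⟨⟩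
    exact hne rfl
  · rw [simpleRefl_of_not_lt hi] at h
    exact absurd h hxy.not_gt

theorem maskProd_cons (i : ℕ) (l : List ℕ) (c : Bool) (m : List Bool) :
    maskProd (n := n) (i :: l) (c :: m) = (if c then simpleRefl i else 1) * maskProd l m := by
  simp [maskProd]

theorem maskProd_append_singleton {l : List ℕ} {m : List Bool} (h : m.length = l.length)
    (i : ℕ) (b : Bool) :
    maskProd (n := n) (l ++ [i]) (m ++ [b]) = maskProd l m * if b then simpleRefl i else 1 := by
  simp [maskProd, List.zip_append h.symm]

def subexprProds (l : List ℕ) : Set (Perm (Fin n)) :=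
  {u | ∃ m : List Bool, m.length = l.length ∧ maskProd l m = u}

theorem wordProd_mem_subexprProds (l : List ℕ) : wordProd (n := n) l ∈ subexprProds l := by
  refine ⟨List.replicate l.length true, List.length_replicate, ?_⟩
  induction l with
  | nil => rfl
  | cons i l ih => simp [List.replicate_succ, maskProd_cons, ih, wordProd]

theorem mul_swap_mem_subexprProds {l : List ℕ} {x : Perm (Fin n)} (hx : x ∈ subexprProds l)
    {a b : Fin n} (hab : a < b) (hba : x b < x a) : x * swap a b ∈ subexprProds l := by
  obtain ⟨m, hm, rfl⟩ := hx
  induction l generalizing m with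
  | nil => exact absurd hba (by simpa [maskProd] using hab.not_gt)
  | cons i l ih =>
    obtain _ | ⟨c, m⟩ := m
    · simp at hm
    rw [maskProd_cons] at hba ⊢
    rcases lt_or_gt_of_ne ((maskProd l m).injective.ne hab.ne) with hv | hv
    · cases c
      · exact absurd hba (by simpa using hv.not_gt)
      -- the first letter creates the inversion, so it swaps the values of the rest at `a`, `b`:
      -- dropping it multiplies by `(a b)`
      rw [if_pos rfl] at hba ⊢
      refine ⟨false :: m, hm, ?_⟩
      rw [maskProd_cons, if_neg Bool.false_ne_true, one_mul, simpleRefl_eq_swap_of_lt hv hba,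
        swap_apply_apply]
      simp [mul_assoc]
    · obtain ⟨m', hm', h⟩ := ih m (by simpa using hm) hv
      exact ⟨c :: m', by simpa using hm', by rw [maskProd_cons, h, mul_assoc]⟩

theorem len_mul_simpleRefl_eq_or (u : Perm (Fin n)) {i : ℕ} (hi : i + 1 < n) :
    len (u * simpleRefl i) = len u + 1 ∨ len (u * simpleRefl i) + 1 = len u := by
  rw [simpleRefl_of_lt hi]
  exact len_mul_swap_eq_or_of_adjacent u rfl

theorem mem_subexprProds_of_bruhatCover {l : List ℕ} {u c : Perm (Fin n)}
    (hc : c ∈ subexprProds l) (h : BruhatCover u c) : u ∈ subexprProds l := by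
  obtain ⟨⟨i, j, hij, rfl⟩, hlen⟩ := h
  obtain ⟨a, b, hab, hswap⟩ : ∃ a b, a < b ∧ swap i j = swap a b := by
    rcases lt_or_gt_of_ne hij with h | h
    exacts [⟨i, j, h, rfl⟩, ⟨j, i, h, swap_comm i j⟩]
  rw [hswap] at hc hlen
  have hba := apply_lt_apply_of_len_mul_swap_lt hab (u := u * swap a b) (by simp [hlen])
  simpa using mul_swap_mem_subexprProds hc hab hba

theorem mem_subexprProds_of_bruhatLE {l : List ℕ} {u w : Perm (Fin n)}
    (hw : w ∈ subexprProds l) (huw : BruhatLE u w) : u ∈ subexprProds l := by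
  induction huw using Relation.ReflTransGen.head_induction_on with
  | refl => exact hw
  | head hcov _ ih => exact mem_subexprProds_of_bruhatCover ih hcov

theorem List.exists_eq_append_singleton_of_length_eq_succ {α : Type*} {m : List α} {k : ℕ}
    (h : m.length = k + 1) : ∃ m' b, m = m' ++ [b] ∧ m'.length = k := by
  rcases m.eq_nil_or_concat' with rfl | ⟨m', b, rfl⟩
  · simp at h
  · exact ⟨m', b, rfl, by simpa using h⟩

theorem mem_subexprProds_append_singleton_iff {l : List ℕ} {i : ℕ} {u : Perm (Fin n)} :
    u ∈ subexprProds (l ++ [i]) ↔ u ∈ subexprProds l ∨ u * simpleRefl i ∈ subexprProds l := by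
  constructor
  · rintro ⟨m, hm, rfl⟩
    obtain ⟨m, b, rfl, hm'⟩ := List.exists_eq_append_singleton_of_length_eq_succ
      (by simpa using hm)
    rw [maskProd_append_singleton hm']
    cases b
    · exact Or.inl ⟨m, hm', by simp⟩
    · exact Or.inr ⟨m, hm', by simp [mul_assoc]⟩
  · rintro (⟨m, hm, rfl⟩ | ⟨m, hm, h⟩)
    · exact ⟨m ++ [false], by simp [hm], by simp [maskProd_append_singleton hm]⟩
    · exact ⟨m ++ [true], by simp [hm], by simp [maskProd_append_singleton hm, h, mul_assoc]⟩

theorem mul_simpleRefl_mem_subexprProds {l : List ℕ} {i : ℕ} {u : Perm (Fin n)}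
    (hu : u ∈ subexprProds l) (h : len (u * simpleRefl i) < len u) :
    u * simpleRefl i ∈ subexprProds l := by
  by_cases hi : i + 1 < n
  · rw [simpleRefl_of_lt hi] at h ⊢
    have hlt : (⟨i, by omega⟩ : Fin n) < ⟨i + 1, hi⟩ := Fin.mk_lt_mk.2 (by omega)
    exact mul_swap_mem_subexprProds hu hlt (apply_lt_apply_of_len_mul_swap_lt hlt h)
  · rw [simpleRefl_of_not_lt hi, mul_one] at h
    exact absurd h (lt_irrefl _)

theorem mem_subexprProds_of_mem_append_singleton {l : List ℕ} {i : ℕ} {u : Perm (Fin n)}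
    (hu : u ∈ subexprProds (l ++ [i])) (h : len u < len (u * simpleRefl i)) :
    u ∈ subexprProds l := by
  rcases mem_subexprProds_append_singleton_iff.1 hu with hu | hu
  · exact hu
  · simpa [mul_assoc] using
      mul_simpleRefl_mem_subexprProds (i := i) hu (by simpa [mul_assoc] using h)

theorem mul_simpleRefl_mem_subexprProds_of_mem_append_singleton {l : List ℕ} {i : ℕ}
    {u : Perm (Fin n)} (hu : u ∈ subexprProds (l ++ [i])) (h : len (u * simpleRefl i) < len u) :
    u * simpleRefl i ∈ subexprProds l := by
  rcases mem_subexprProds_append_singleton_iff.1 hu with hu | hu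
  · exact mul_simpleRefl_mem_subexprProds hu h
  · exact hu

theorem isPDS_append_singleton {l : List ℕ} {m : List Bool} (hm : m.length = l.length)
    (i : ℕ) (b : Bool) :
    IsPDS (n := n) (l ++ [i]) (m ++ [b]) ↔
      IsPDS (n := n) l m ∧
        len (maskProd (n := n) l m * simpleRefl i) = len (maskProd (n := n) l m) + 1 := by
  simp only [IsPDS, List.length_append, List.length_singleton, Nat.forall_lt_succ_right, hm,
    true_and]
  refine and_congr (forall₂_congr fun j hj => ?_) ?_
  · rw [List.take_append_of_le_length hj.le, List.take_append_of_le_length (hm ▸ hj.le),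
      List.getD_append _ _ _ _ hj]
  · rw [List.take_left' rfl, List.take_left' hm, List.getD_append_right _ _ _ _ le_rfl]
    simp

theorem IsPDS.last_eq_decide {l : List ℕ} {m : List Bool} {i : ℕ} {b : Bool}
    (hm : m.length = l.length) (h : IsPDS (n := n) (l ++ [i]) (m ++ [b])) :
    b = decide (len (maskProd (n := n) (l ++ [i]) (m ++ [b]) * simpleRefl i) <
      len (maskProd (n := n) (l ++ [i]) (m ++ [b]))) := by
  rw [isPDS_append_singleton hm] at h
  rw [maskProd_append_singleton hm]
  cases b <;> simp [mul_assoc, h.2]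

theorem IsPDS.eq_of_maskProd_eq {l : List ℕ} {m m' : List Bool} (h : IsPDS (n := n) l m)
    (h' : IsPDS (n := n) l m') (he : maskProd (n := n) l m = maskProd l m') : m = m' := by
  induction l using List.reverseRecOn generalizing m m' with
  | nil => rw [List.eq_nil_of_length_eq_zero h.1, List.eq_nil_of_length_eq_zero h'.1]
  | append_singleton l i ih =>
    obtain ⟨m, b, rfl, hm⟩ :=
      List.exists_eq_append_singleton_of_length_eq_succ (by simpa using h.1)
    obtain ⟨m', b', rfl, hm'⟩ :=
      List.exists_eq_append_singleton_of_length_eq_succ (by simpa using h'.1)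
    obtain rfl : b = b' := by rw [h.last_eq_decide hm, h'.last_eq_decide hm', he]
    rw [maskProd_append_singleton hm, maskProd_append_singleton hm'] at he
    rw [ih ((isPDS_append_singleton hm i b).1 h).1 ((isPDS_append_singleton hm' i b).1 h').1
      (mul_right_cancel he)]

theorem exists_isPDS {l : List ℕ} (hl : ∀ i ∈ l, i + 1 < n) {u : Perm (Fin n)}
    (hu : u ∈ subexprProds l) : ∃ m, IsPDS (n := n) l m ∧ maskProd l m = u := by
  induction l using List.reverseRecOn generalizing u with
  | nil =>
    obtain ⟨m, -, rfl⟩ := hu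
    exact ⟨[], ⟨rfl, by simp⟩, rfl⟩
  | append_singleton l i ih =>
    have hl' : ∀ j ∈ l, j + 1 < n := fun j hj => hl j (by simp [hj])
    rcases len_mul_simpleRefl_eq_or u (hl i (by simp)) with h | h
    · obtain ⟨m, hm, rfl⟩ := ih hl' (mem_subexprProds_of_mem_append_singleton hu (by omega))
      refine ⟨m ++ [false], (isPDS_append_singleton hm.1 i false).2 ⟨hm, h⟩, ?_⟩
      simp [maskProd_append_singleton hm.1]
    · obtain ⟨m, hm, hmu⟩ :=
        ih hl' (mul_simpleRefl_mem_subexprProds_of_mem_append_singleton hu (by omega))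
      refine ⟨m ++ [true], (isPDS_append_singleton hm.1 i true).2 ⟨hm, ?_⟩, ?_⟩
      · simp [hmu, mul_assoc]
        omega
      · simp [maskProd_append_singleton hm.1, hmu, mul_assoc]

theorem existsUnique_PDS_general {n : ℕ} (l : List ℕ) (u w : Equiv.Perm (Fin n))
    (hvalid : ∀ i ∈ l, i + 1 < n) (hw : wordProd l = w)
    (huw : BruhatLE u w) :
    ∃! m : List Bool, IsPDS (n := n) l m ∧ maskProd (n := n) l m = u := by
  have hu : u ∈ subexprProds l :=
    mem_subexprProds_of_bruhatLE (hw ▸ wordProd_mem_subexprProds l) huw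
  obtain ⟨m, hm, rfl⟩ := exists_isPDS hvalid hu
  exact ⟨m, ⟨hm, rfl⟩, fun m' ⟨hm', he⟩ => hm'.eq_of_maskProd_eq hm he⟩

/-- Existence and uniqueness of the positive distinguished subexpression for
`u` in a reduced word for `w`, whenever `u ≤ w` in Bruhat order. -/
theorem existsUnique_PDS {n : ℕ} (l : List ℕ) (u w : Equiv.Perm (Fin n))
    (hvalid : ∀ i ∈ l, i + 1 < n) (hw : wordProd l = w) (hred : len w = l.length)
    (huw : BruhatLE u w) :
    ∃! m : List Bool, IsPDS (n := n) l m ∧ maskProd (n := n) l m = u :=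
  existsUnique_PDS_general l u w hvalid hw huw
end

section
/- For $u \le_k w$ in $S_n$ and $\omega_k \in \mathbb{Z}^n$ the vector with first $k$ entries $1$ and remaining entries $0$, the function $f_{u,w} = u \circ t_{\omega_k} \circ w^{-1}$ (where $t_{\omega_k}(i) = i + n\cdot(\omega_k)_{i \bmod n}$ suitably extended) is a bounded affine permutation of type $(k,n)$: it is a bijection $\mathbb{Z} \to \mathbb{Z}$ with $f(i+n) = f(i)+n$, satisfies $i \le f(i) \le i+n$ for all $i$, and $\frac{1}{n}\sum_{i=1}^n (f(i)-i) = k$. -/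
/-- The residue of `i : ℤ` modulo `n`, as an element of `Fin n` (zero-indexed). -/
def resFin {n : ℕ} [NeZero n] (i : ℤ) : Fin n :=
  ⟨(i % (n : ℤ)).toNat, by
    have hn : 0 < (n : ℤ) := by exact_mod_cast Nat.pos_of_ne_zero (NeZero.ne n)
    have h1 := Int.emod_nonneg i (ne_of_gt hn)
    have h2 := Int.emod_lt_of_pos i hn
    omega⟩

/-- The `n`-periodic extension of a permutation of `Fin n` to a bijection of `ℤ`. -/
def extPerm {n : ℕ} [NeZero n] (u : Equiv.Perm (Fin n)) : ℤ → ℤ :=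
  fun i => (n : ℤ) * (i / (n : ℤ)) + ((u (resFin i)).val : ℤ)

/-- The translation element `t_J : ℤ → ℤ`, sending `i ↦ i + n` when the residue
of `i` lies in `J`, and fixing `i` otherwise. -/
def transJ {n : ℕ} [NeZero n] (J : Finset (Fin n)) : ℤ → ℤ :=
  fun i => if resFin i ∈ J then i + (n : ℤ) else i

/-- The index set `ω_k = {1,…,k}` (zero-indexed: residues `< k`). -/
def omegaSet (n k : ℕ) : Finset (Fin n) :=
  Finset.univ.filter fun i : Fin n => i.val < k

/-- The affine permutation `f_{u,w} = u ∘ t_{ω_k} ∘ w⁻¹`. -/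
def fUW {n : ℕ} [NeZero n] (k : ℕ) (u w : Equiv.Perm (Fin n)) : ℤ → ℤ :=
  extPerm u ∘ transJ (omegaSet n k) ∘ extPerm w⁻¹

/-!
A `k`-cover `u ⋖ u·(p q)` with `p < q` has `u p < u q`, since otherwise `u = u·(p q)·(p q)`
would have more inversions than `u·(p q)`, and has `p < k ≤ q`, since otherwise `u({1,…,k})`
would not move. Hence along a `k`-chain from `u` to `w` the values on `{1,…,k}` only grow and
those on `{k+1,…,n}` only shrink: `u a ≤ w a` for `a ≤ k` and `w b ≤ u b` for `b > k`.

Writing `i = nq + a` with `0 ≤ a < n`, one computes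
`f_{u,w}(nq + a) = n(q + [w⁻¹ a ≤ k]) + u(w⁻¹ a)`, an affine lift of the permutation `u w⁻¹`.
Such a lift is an `n`-periodic bijection of `ℤ`, its window sum is `n · #{b ≤ k} = nk`, and the
bounds `i ≤ f(i) ≤ i + n` are exactly the value inequalities at `b = w⁻¹ a`.
-/

section Inversions
variable {n : ℕ}

theorem len_lt_len_mul_swap_s9 {v : Equiv.Perm (Fin n)} {p q : Fin n} (hpq : p < q)
    (hv : v p < v q) : len v < len (v * Equiv.swap p q) := by
  classical
  set w := v * Equiv.swap p q
  have hw : ∀ x, w x = v (Equiv.swap p q x) := fun _ => rfl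
  have hinj : ∀ x y, v x = v y → x = y := fun _ _ h => v.injective h
  set S := Finset.univ.filter fun P : Fin n × Fin n => P.1 < P.2 ∧ v P.2 < v P.1
  set T := Finset.univ.filter fun P : Fin n × Fin n => P.1 < P.2 ∧ w P.2 < w P.1
  -- `(p, q)` is a new inversion of `w`; an inversion `(a, p)` or `(q, b)` of `v` that `w` loses
  -- is traded for `(a, q)` resp. `(p, b)`.
  let ψ : Fin n × Fin n → Fin n × Fin n := fun P =>
    if P.2 = p ∧ v P.1 < v q then (P.1, q)
    else if P.1 = q ∧ v p < v P.2 then (p, P.2) else P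
  have hmaps : ∀ P ∈ S, ψ P ∈ T.erase (p, q) := by
    rintro ⟨a, b⟩ hP
    simp only [S, T, Finset.mem_filter, Finset.mem_univ, true_and, Finset.mem_erase] at hP ⊢
    simp only [ψ, hw, Equiv.swap_apply_def]
    split_ifs <;> grind
  have hψinj : Set.InjOn ψ S := by
    rintro ⟨a, b⟩ hP ⟨c, d⟩ hQ
    simp only [S, Finset.coe_filter, Finset.mem_univ, true_and, Set.mem_ofPred_eq] at hP hQ
    simp only [ψ]
    split_ifs <;> grind
  have hpqT : (p, q) ∈ T := by simp [T, hpq, hw, hv]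
  calc len v = (S.image ψ).card := (Finset.card_image_of_injOn hψinj).symm
    _ ≤ (T.erase (p, q)).card := Finset.card_le_card (Finset.image_subset_iff.mpr hmaps)
    _ < T.card := Finset.card_erase_lt_of_mem hpqT

end Inversions

section KBruhat
variable {n k : ℕ}

/-- The value part of the Bergeron–Sottile criterion for `u ≤_k w`. -/
def KValueLE (k : ℕ) (u w : Equiv.Perm (Fin n)) : Prop :=
  (∀ a : Fin n, a.val < k → u a ≤ w a) ∧ (∀ a : Fin n, k ≤ a.val → w a ≤ u a)

theorem KValueLE.refl (u : Equiv.Perm (Fin n)) : KValueLE k u u :=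
  ⟨fun _ _ => le_rfl, fun _ _ => le_rfl⟩

theorem KValueLE.trans {u v w : Equiv.Perm (Fin n)} (huv : KValueLE k u v)
    (hvw : KValueLE k v w) : KValueLE k u w :=
  ⟨fun a ha => (huv.1 a ha).trans (hvw.1 a ha), fun a ha => (hvw.2 a ha).trans (huv.2 a ha)⟩

theorem kImage_mul_swap {u : Equiv.Perm (Fin n)} {p q : Fin n} (h : p.val < k ↔ q.val < k) :
    kImage k (u * Equiv.swap p q) = kImage k u := by
  ext y
  simp only [kImage, Finset.mem_image, Finset.mem_filter, Finset.mem_univ, true_and,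
    Equiv.Perm.mul_apply]
  constructor
  · rintro ⟨x, hx, rfl⟩
    exact ⟨Equiv.swap p q x, by rw [Equiv.swap_apply_def]; split_ifs <;> grind, rfl⟩
  · rintro ⟨x, hx, rfl⟩
    exact ⟨Equiv.swap p q x, by rw [Equiv.swap_apply_def]; split_ifs <;> grind,
      by rw [Equiv.swap_apply_self]⟩

theorem KBruhatCover.kValueLE {u w : Equiv.Perm (Fin n)} (h : KBruhatCover k u w) :
    KValueLE k u w := by
  obtain ⟨⟨⟨i, j, hij, rfl⟩, hlen⟩, hk⟩ := h
  wlog hlt : i < j generalizing i j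
  · rw [Equiv.swap_comm] at hlen hk ⊢
    exact this j i hij.symm hk hlen (hij.lt_or_gt.resolve_left hlt)
  have hu : u i < u j := by
    refine (u.injective.ne hij).lt_or_gt.resolve_right fun hji => ?_
    have := len_lt_len_mul_swap_s9 (v := u * Equiv.swap i j) hlt (by simpa using hji)
    rw [mul_assoc, Equiv.swap_mul_self, mul_one] at this
    omega
  have hside : i.val < k ∧ k ≤ j.val := by
    by_contra hs
    exact hk (kImage_mul_swap (by rw [Fin.lt_def] at hlt; omega)).symm
  constructor <;> intro a ha <;>
    simp only [Equiv.Perm.mul_apply, Equiv.swap_apply_def] <;> split_ifs <;> grind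

theorem KBruhatLE.kValueLE {u w : Equiv.Perm (Fin n)} (h : KBruhatLE k u w) :
    KValueLE k u w := by
  induction h with
  | refl => exact .refl u
  | tail _ hcov ih => exact ih.trans hcov.kValueLE

end KBruhat

section AffineLift
variable {n : ℕ} [NeZero n]

theorem resFin_mul_add (q : ℤ) (a : Fin n) : resFin ((n : ℤ) * q + a) = a := by
  ext
  simp [resFin, Int.emod_eq_of_lt]

theorem ediv_mul_add (q : ℤ) (a : Fin n) : ((n : ℤ) * q + a) / n = q := by
  have : (0 : ℤ) < n := by exact_mod_cast NeZero.pos n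
  rw [add_comm, Int.add_mul_ediv_left _ _ this.ne', Int.ediv_eq_zero_of_lt (by omega) (by omega),
    zero_add]

theorem exists_eq_mul_add (i : ℤ) : ∃ (q : ℤ) (a : Fin n), i = n * q + a := by
  refine ⟨i / n, resFin i, ?_⟩
  have : (0 : ℤ) < n := by exact_mod_cast NeZero.pos n
  simp [resFin, Int.toNat_of_nonneg (Int.emod_nonneg i this.ne'), Int.mul_ediv_add_emod]

theorem extPerm_mul_add (u : Equiv.Perm (Fin n)) (q : ℤ) (a : Fin n) :
    extPerm u (n * q + a) = n * q + u a := by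
  simp [extPerm, resFin_mul_add, ediv_mul_add]

theorem transJ_mul_add (J : Finset (Fin n)) (q : ℤ) (a : Fin n) :
    transJ J (n * q + a) = n * (q + if a ∈ J then 1 else 0) + a := by
  simp only [transJ, resFin_mul_add]
  split_ifs <;> ring

theorem bijective_of_apply_mul_add {f : ℤ → ℤ} (c : Fin n → ℤ) (σ : Equiv.Perm (Fin n))
    (hf : ∀ (q : ℤ) (a : Fin n), f (n * q + a) = n * (q + c a) + σ a) : Function.Bijective f := by
  let g : ℤ → ℤ := fun i => n * (i / n - c (σ⁻¹ (resFin i))) + σ⁻¹ (resFin i)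
  have hg : ∀ (q : ℤ) (b : Fin n), g (n * q + b) = n * (q - c (σ⁻¹ b)) + σ⁻¹ b := fun q b => by
    simp only [g, resFin_mul_add, ediv_mul_add]
  refine Function.bijective_iff_has_inverse.mpr ⟨g, fun i => ?_, fun i => ?_⟩
  · obtain ⟨q, a, rfl⟩ := exists_eq_mul_add (n := n) i
    simp [hf, hg]
  · obtain ⟨q, b, rfl⟩ := exists_eq_mul_add (n := n) i
    simp [hf, hg]

theorem apply_add_of_apply_mul_add {f : ℤ → ℤ} (c : Fin n → ℤ) (σ : Equiv.Perm (Fin n))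
    (hf : ∀ (q : ℤ) (a : Fin n), f (n * q + a) = n * (q + c a) + σ a) (i : ℤ) :
    f (i + n) = f i + n := by
  obtain ⟨q, a, rfl⟩ := exists_eq_mul_add (n := n) i
  rw [show (n : ℤ) * q + a + n = n * (q + 1) + a by ring, hf, hf]
  ring

end AffineLift

section AffinePermutation
variable {n k : ℕ} [NeZero n]

theorem fUW_mul_add (u w : Equiv.Perm (Fin n)) (q : ℤ) (a : Fin n) :
    fUW k u w (n * q + a) = n * (q + if (w⁻¹ a).val < k then 1 else 0) + u (w⁻¹ a) := by
  simp [fUW, extPerm_mul_add, transJ_mul_add, omegaSet]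

theorem fUW_mem_Icc {u w : Equiv.Perm (Fin n)} (h : KValueLE k u w) (i : ℤ) :
    i ≤ fUW k u w i ∧ fUW k u w i ≤ i + n := by
  obtain ⟨q, a, rfl⟩ := exists_eq_mul_add (n := n) i
  obtain ⟨b, rfl⟩ := w.surjective a
  rw [fUW_mul_add, show w⁻¹ (w b) = b from w.symm_apply_apply b, mul_add]
  have hub : (u b).val < n := (u b).isLt
  split_ifs with hb
  · have := Fin.le_def.mp (h.1 b hb)
    omega
  · have := Fin.le_def.mp (h.2 b (not_lt.mp hb))
    omega

theorem sum_range_fUW_sub (hk : k ≤ n) (u w : Equiv.Perm (Fin n)) :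
    ∑ i ∈ Finset.range n, (fUW k u w i - i) = n * k := by
  have hterm : ∀ a : Fin n, fUW k u w a - a
      = n * (if (w⁻¹ a).val < k then 1 else 0) + ((u (w⁻¹ a)).val - a.val) := fun a => by
    have := fUW_mul_add (k := k) u w 0 a
    rw [mul_zero, zero_add] at this
    rw [this]
    ring
  have hperm : ∑ a : Fin n, ((u (w⁻¹ a)).val : ℤ) = ∑ a : Fin n, (a.val : ℤ) :=
    Equiv.sum_comp (w⁻¹.trans u) (fun b => (b.val : ℤ))
  have hcount : ∑ a : Fin n, (if (w⁻¹ a).val < k then 1 else 0 : ℤ) = k := by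
    rw [Equiv.sum_comp w⁻¹ (fun b => if b.val < k then (1 : ℤ) else 0), Finset.sum_boole,
      Fin.card_filter_val_lt, min_eq_right hk]
  rw [← Fin.sum_univ_eq_sum_range (fun i => fUW k u w i - i),
    Finset.sum_congr rfl fun a _ => hterm a, Finset.sum_add_distrib, ← Finset.mul_sum,
    Finset.sum_sub_distrib, hperm, hcount, sub_self, add_zero]

end AffinePermutation

/-- For `u ≤_k w`, the function `f_{u,w} = u ∘ t_{ω_k} ∘ w⁻¹` is a bounded
affine permutation of type `(k,n)`. -/
theorem fUW_bounded_affine {n k : ℕ} [NeZero n] (hk : k ≤ n) (u w : Equiv.Perm (Fin n))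
    (h : KBruhatLE k u w) :
    Function.Bijective (fUW k u w) ∧
    (∀ i : ℤ, fUW k u w (i + n) = fUW k u w i + n) ∧
    (∀ i : ℤ, i ≤ fUW k u w i ∧ fUW k u w i ≤ i + n) ∧
    (∑ i ∈ Finset.range n, (fUW k u w (i : ℤ) - (i : ℤ))) = (n : ℤ) * k := by
  have hf := fUW_mul_add (k := k) u w
  exact ⟨bijective_of_apply_mul_add _ (u * w⁻¹) hf, apply_add_of_apply_mul_add _ (u * w⁻¹) hf,
    fUW_mem_Icc h.kValueLE, sum_range_fUW_sub hk u w⟩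
end

section
/- Let $u \le_k w$ in $S_n$ and let $z \in S_k \times S_{n-k}$ be such that the factorizations $u' = uz$ and $w' = wz$ are both length additive. Then $f_{u',w'} = f_{u,w}$, where $f_{u,w} = u\, t_{\omega_k}\, w^{-1}$. -/
lemma extPerm_div {n : ℕ} [NeZero n] (v : Equiv.Perm (Fin n)) (i : ℤ) :
    extPerm v i / (n : ℤ) = i / (n : ℤ) := by
  have hn : (0:ℤ) < n := by exact_mod_cast Nat.pos_of_ne_zero (NeZero.ne n)
  have hc0 : (0:ℤ) ≤ ((v (resFin i)).val : ℤ) := by positivity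
  have hc : ((v (resFin i)).val : ℤ) < n := by exact_mod_cast (v (resFin i)).isLt
  show ((n:ℤ) * (i / n) + ((v (resFin i)).val : ℤ)) / n = i / n
  rw [add_comm, mul_comm, Int.add_mul_ediv_right _ _ (ne_of_gt hn),
    Int.ediv_eq_zero_of_lt hc0 hc, zero_add]

lemma extPerm_res {n : ℕ} [NeZero n] (v : Equiv.Perm (Fin n)) (i : ℤ) :
    resFin (extPerm v i) = v (resFin i) := by
  have hn : (0:ℤ) < n := by exact_mod_cast Nat.pos_of_ne_zero (NeZero.ne n)
  have hc0 : (0:ℤ) ≤ ((v (resFin i)).val : ℤ) := by positivity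
  have hc : ((v (resFin i)).val : ℤ) < n := by exact_mod_cast (v (resFin i)).isLt
  apply Fin.ext
  show ((extPerm v i) % (n:ℤ)).toNat = (v (resFin i)).val
  have : (extPerm v i) % (n:ℤ) = ((v (resFin i)).val : ℤ) := by
    show ((n:ℤ) * (i / n) + ((v (resFin i)).val : ℤ)) % n = _
    rw [add_comm, Int.add_mul_emod_self_left, Int.emod_eq_of_lt hc0 hc]
  rw [this]; exact Int.toNat_natCast _

lemma extPerm_mul {n : ℕ} [NeZero n] (a b : Equiv.Perm (Fin n)) :
    extPerm (a * b) = extPerm a ∘ extPerm b := by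
  funext i
  show (n:ℤ) * (i / n) + (((a * b) (resFin i)).val : ℤ)
      = (n:ℤ) * ((extPerm b i) / n) + ((a (resFin (extPerm b i))).val : ℤ)
  rw [extPerm_div, extPerm_res, Equiv.Perm.mul_apply]

lemma extPerm_one {n : ℕ} [NeZero n] : extPerm (1 : Equiv.Perm (Fin n)) = id := by
  funext i
  have hn : (0:ℤ) < n := by exact_mod_cast Nat.pos_of_ne_zero (NeZero.ne n)
  show (n:ℤ) * (i / n) + (((1 : Equiv.Perm (Fin n)) (resFin i)).val : ℤ) = i
  have h1 := Int.emod_nonneg i (ne_of_gt hn)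
  have : (((1 : Equiv.Perm (Fin n)) (resFin i)).val : ℤ) = i % n := by
    show (((resFin i : Fin n)).val : ℤ) = i % n
    show (((i % (n:ℤ)).toNat : ℤ)) = i % n
    exact Int.toNat_of_nonneg h1
  rw [this, Int.mul_ediv_add_emod]

lemma extPerm_add_n {n : ℕ} [NeZero n] (v : Equiv.Perm (Fin n)) (i : ℤ) :
    extPerm v (i + n) = extPerm v i + n := by
  have hn : (0:ℤ) < n := by exact_mod_cast Nat.pos_of_ne_zero (NeZero.ne n)
  have hdiv : (i + (n:ℤ)) / n = i / n + 1 := by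
    have := Int.add_mul_ediv_right i 1 (ne_of_gt hn)
    simpa using this
  have hres : resFin (i + (n:ℤ)) = (resFin i : Fin n) := by
    apply Fin.ext
    show ((i + (n:ℤ)) % n).toNat = (i % (n:ℤ)).toNat
    have : (i + (n:ℤ)) % n = i % n := by
      have := Int.add_mul_emod_self_left (a := i) (b := (n:ℤ)) (c := 1)
      simpa using this
    rw [this]
  show (n:ℤ) * ((i + n) / n) + ((v (resFin (i+(n:ℤ)))).val : ℤ)
      = (n:ℤ) * (i / n) + ((v (resFin i)).val : ℤ) + n
  rw [hdiv, hres]; ring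

lemma extPerm_transJ_comm {n k : ℕ} [NeZero n] (z : Equiv.Perm (Fin n))
    (hz : IsYoung k z) :
    extPerm z ∘ transJ (omegaSet n k) = transJ (omegaSet n k) ∘ extPerm z := by
  funext i
  have hmem : resFin (extPerm z i) ∈ omegaSet n k ↔ (resFin i : Fin n) ∈ omegaSet n k := by
    rw [extPerm_res]
    simp only [omegaSet, Finset.mem_filter, Finset.mem_univ, true_and]
    exact hz _
  show extPerm z (transJ (omegaSet n k) i) = transJ (omegaSet n k) (extPerm z i)
  unfold transJ
  simp only [hmem]
  by_cases hi : (resFin i : Fin n) ∈ omegaSet n k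
  · rw [if_pos hi, if_pos hi, extPerm_add_n]
  · rw [if_neg hi, if_neg hi]

/-- If `u ≤_k w` and `z ∈ S_k × S_{n-k}` with both factorizations `uz` and `wz`
length additive, then `f_{uz,wz} = f_{u,w}`. -/
theorem fUW_well_defined {n k : ℕ} [NeZero n] (hk : k ≤ n) (u w z : Equiv.Perm (Fin n))
    (h : KBruhatLE k u w) (hz : IsYoung k z)
    (hadd1 : len (u * z) = len u + len z) (hadd2 : len (w * z) = len w + len z) :
    fUW k (u * z) (w * z) = fUW k u w := by
  unfold fUW
  rw [mul_inv_rev, extPerm_mul, extPerm_mul]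
  have hzinv : IsYoung k z⁻¹ := by
    intro i
    have := hz (z⁻¹ i)
    simpa using this.symm
  calc extPerm u ∘ extPerm z ∘ transJ (omegaSet n k) ∘ extPerm z⁻¹ ∘ extPerm w⁻¹
      = extPerm u ∘ (extPerm z ∘ transJ (omegaSet n k)) ∘ extPerm z⁻¹ ∘ extPerm w⁻¹ := rfl
    _ = extPerm u ∘ (transJ (omegaSet n k) ∘ extPerm z) ∘ extPerm z⁻¹ ∘ extPerm w⁻¹ := by
        rw [extPerm_transJ_comm z hz]
    _ = extPerm u ∘ transJ (omegaSet n k) ∘ (extPerm z ∘ extPerm z⁻¹) ∘ extPerm w⁻¹ := rfl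
    _ = extPerm u ∘ transJ (omegaSet n k) ∘ extPerm w⁻¹ := by
        rw [← extPerm_mul, mul_inv_cancel, extPerm_one]
        rfl
end

section
/- Every bounded affine permutation $f$ of type $(k,n)$ admits a unique factorization $f = \sigma \circ t_\mu$ with $\sigma \in S_n$ (extended periodically) and $\mu \in \binom{[n]}{k}$, and a unique factorization $f = t_\nu \circ \sigma'$ with $\sigma' \in S_n$ and $\nu \in \binom{[n]}{k}$. -/
/-! The values of `f` on the window `0, …, n-1` lie in `[0, 2n)` and, by periodicity, determine
`f`. Each such value splits uniquely as `σ r + n·[r ∈ μ]` with `σ r` its residue mod `n`; `σ` is a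
permutation because `f` is surjective and commutes with `i ↦ i + n`. This gives existence and
uniqueness of `f = σ ∘ t_μ`, and summing `f r - r` over the window shows `|μ| = k`. The second
factorization is the first one transported along `σ ∘ t_J = t_{σ(J)} ∘ σ`. -/

open Equiv Finset Function

lemma eq_and_iff_of_coe_add_ite_eq {n : ℕ} {a b : Fin n} {P Q : Prop} [Decidable P] [Decidable Q]
    (h : (a : ℤ) + (if P then (n : ℤ) else 0) = b + if Q then (n : ℤ) else 0) :
    a = b ∧ (P ↔ Q) := by
  have := a.isLt
  have := b.isLt
  split_ifs at h <;> first | exact ⟨Fin.ext (by omega), by tauto⟩ | omega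

section AffinePermutation

variable {n : ℕ} [NeZero n]

lemma coe_resFin (i : ℤ) : ((resFin i : Fin n) : ℤ) = i % n :=
  Int.toNat_of_nonneg (Int.emod_nonneg i (by exact_mod_cast NeZero.ne n))

lemma resFin_natCast (r : Fin n) : resFin (r : ℤ) = r :=
  Fin.ext <| by
    have h : ((resFin (r : ℤ) : Fin n) : ℤ) = r := by
      rw [coe_resFin]
      exact Int.emod_eq_of_lt (by positivity) (by exact_mod_cast r.isLt)
    exact_mod_cast h

lemma resFin_add_mul (i q : ℤ) : resFin (i + n * q) = (resFin i : Fin n) :=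
  Fin.ext <| by
    have h : ((resFin (i + n * q) : Fin n) : ℤ) = (resFin i : Fin n) := by
      rw [coe_resFin, coe_resFin, Int.add_mul_emod_self_left]
    exact_mod_cast h

lemma apply_eq_apply_resFin_add {f : ℤ → ℤ} (hf : ∀ i, f (i + n) = f i + n) (i : ℤ) :
    f i = f (resFin i : Fin n) + n * (i / n) := by
  have h := AddConstMapClass.map_add_zsmul (⟨f, hf⟩ : AddConstMap ℤ ℤ n n) (i % n) (i / n)
  simp only [AddConstMap.coe_mk, smul_eq_mul] at h
  rw [coe_resFin, mul_comm, ← h, mul_comm, Int.emod_add_mul_ediv]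

lemma funext_of_map_add_self {f g : ℤ → ℤ} (hf : ∀ i, f (i + n) = f i + n)
    (hg : ∀ i, g (i + n) = g i + n) (h : ∀ r : Fin n, f r = g r) : f = g :=
  funext fun i => by rw [apply_eq_apply_resFin_add hf, apply_eq_apply_resFin_add hg, h]

lemma extPerm_natCast (u : Perm (Fin n)) (r : Fin n) : extPerm u r = u r := by
  rw [extPerm, resFin_natCast, Int.ediv_eq_zero_of_lt (by positivity) (by exact_mod_cast r.isLt),
    mul_zero, zero_add]

lemma extPerm_add_self (u : Perm (Fin n)) (i : ℤ) : extPerm u (i + n) = extPerm u i + n := by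
  have h := resFin_add_mul (n := n) i 1
  rw [mul_one] at h
  rw [extPerm, extPerm, h, Int.add_ediv_of_dvd_right (dvd_refl _),
    Int.ediv_self (by exact_mod_cast NeZero.ne n)]
  ring

lemma resFin_extPerm (u : Perm (Fin n)) (i : ℤ) : resFin (extPerm u i) = u (resFin i) := by
  rw [extPerm, add_comm, resFin_add_mul, resFin_natCast]

lemma transJ_add_self (J : Finset (Fin n)) (i : ℤ) : transJ J (i + n) = transJ J i + n := by
  have h := resFin_add_mul (n := n) i 1
  rw [mul_one] at h
  simp only [transJ, h]
  split_ifs <;> rfl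

lemma extPerm_comp_transJ_add_self (u : Perm (Fin n)) (J : Finset (Fin n)) (i : ℤ) :
    (extPerm u ∘ transJ J) (i + n) = (extPerm u ∘ transJ J) i + n := by
  simp only [comp_apply, transJ_add_self, extPerm_add_self]

lemma extPerm_comp_transJ_natCast (u : Perm (Fin n)) (J : Finset (Fin n)) (r : Fin n) :
    (extPerm u ∘ transJ J) r = (u r : ℤ) + if r ∈ J then (n : ℤ) else 0 := by
  simp only [comp_apply, transJ, resFin_natCast]
  split_ifs <;> simp [extPerm_add_self, extPerm_natCast]

lemma transJ_map_comp_extPerm (u : Perm (Fin n)) (J : Finset (Fin n)) :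
    transJ (J.map u.toEmbedding) ∘ extPerm u = extPerm u ∘ transJ J := by
  funext i
  simp only [comp_apply, transJ, resFin_extPerm, mem_map_equiv, symm_apply_apply]
  split_ifs <;> simp [extPerm_add_self]

lemma extPerm_comp_transJ_injective :
    Injective fun p : Perm (Fin n) × Finset (Fin n) => extPerm p.1 ∘ transJ p.2 := by
  rintro ⟨u, J⟩ ⟨v, K⟩ h
  have key (r : Fin n) := eq_and_iff_of_coe_add_ite_eq <| by
    simpa only [extPerm_comp_transJ_natCast] using congrFun h r
  exact Prod.ext (Equiv.ext fun r => (key r).1) (Finset.ext fun r => (key r).2)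

lemma sum_extPerm_comp_transJ_sub (u : Perm (Fin n)) (J : Finset (Fin n)) :
    ∑ r : Fin n, ((extPerm u ∘ transJ J) r - r) = n * #J := by
  simp only [extPerm_comp_transJ_natCast, add_sub_right_comm, sum_add_distrib, sum_sub_distrib,
    Equiv.sum_comp u (fun r => (r : ℤ)), sub_self, zero_add, sum_ite_mem, univ_inter, sum_const,
    nsmul_eq_mul]
  ring

lemma bijective_resFin_apply_natCast {f : ℤ → ℤ} (hsurj : Surjective f)
    (hf : ∀ i, f (i + n) = f i + n) : Bijective fun r : Fin n => (resFin (f r) : Fin n) := by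
  refine Finite.surjective_iff_bijective.mp fun s => ?_
  obtain ⟨i, hi⟩ := hsurj s
  refine ⟨resFin i, ?_⟩
  rw [apply_eq_apply_resFin_add hf i] at hi
  rw [← resFin_add_mul _ (i / n), hi, resFin_natCast]

lemma eq_coe_resFin_add_ite {v : ℤ} (h0 : 0 ≤ v) (h2 : v < 2 * n) :
    v = (resFin v : Fin n) + if (n : ℤ) ≤ v then (n : ℤ) else 0 := by
  rw [coe_resFin]
  split_ifs with h
  · rw [← Int.sub_emod_right, Int.emod_eq_of_lt (by omega) (by omega)]
    ring
  · rw [Int.emod_eq_of_lt h0 (by omega)]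
    ring

lemma exists_eq_extPerm_comp_transJ {f : ℤ → ℤ} (hsurj : Surjective f)
    (hf : ∀ i, f (i + n) = f i + n) (hbd : ∀ i, i ≤ f i ∧ f i ≤ i + n) :
    ∃ (σ : Perm (Fin n)) (μ : Finset (Fin n)), f = extPerm σ ∘ transJ μ := by
  refine ⟨.ofBijective _ (bijective_resFin_apply_natCast hsurj hf),
    ({r | (n : ℤ) ≤ f r} : Finset (Fin n)),
    funext_of_map_add_self hf (extPerm_comp_transJ_add_self _ _) fun r => ?_⟩
  rw [extPerm_comp_transJ_natCast, ofBijective_apply]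
  simp only [mem_filter, mem_univ, true_and]
  have := hbd r
  have := r.isLt
  exact eq_coe_resFin_add_ite (by omega) (by omega)

end AffinePermutation

/-- Every bounded affine permutation of type `(k,n)` factors uniquely as
`σ ∘ t_μ` and uniquely as `t_ν ∘ σ'` with `σ, σ' ∈ S_n` and `μ, ν` `k`-element
subsets of `{1,…,n}`. -/
theorem bounded_affine_unique_factorization {n k : ℕ} [NeZero n] (f : ℤ → ℤ)
    (hbij : Function.Bijective f)
    (hper : ∀ i : ℤ, f (i + n) = f i + n)
    (hbd : ∀ i : ℤ, i ≤ f i ∧ f i ≤ i + n)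
    (hsum : (∑ i ∈ Finset.range n, (f (i : ℤ) - (i : ℤ))) = (n : ℤ) * k) :
    (∃! p : Equiv.Perm (Fin n) × Finset (Fin n),
        p.2.card = k ∧ f = extPerm p.1 ∘ transJ p.2) ∧
    (∃! q : Equiv.Perm (Fin n) × Finset (Fin n),
        q.2.card = k ∧ f = transJ q.2 ∘ extPerm q.1) := by
  obtain ⟨σ, μ, hfac⟩ := exists_eq_extPerm_comp_transJ hbij.surjective hper hbd
  have hcard : #μ = k := by
    have h := sum_extPerm_comp_transJ_sub σ μ
    rw [← hfac, Fin.sum_univ_eq_sum_range (fun i => f i - i), hsum] at h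
    exact_mod_cast (mul_left_cancel₀ (by exact_mod_cast NeZero.ne n) h).symm
  have h₁ : ∃! p : Perm (Fin n) × Finset (Fin n), #p.2 = k ∧ f = extPerm p.1 ∘ transJ p.2 :=
    ⟨(σ, μ), ⟨hcard, hfac⟩, fun p hp => extPerm_comp_transJ_injective (hp.2.symm.trans hfac)⟩
  refine ⟨h₁, (Equiv.existsUnique_congr (prodShear (.refl _) Equiv.finsetCongr) ?_).mp h₁⟩
  rintro ⟨u, J⟩
  simp [finsetCongr_apply, transJ_map_comp_extPerm]
end

section
/- Let $u \le w$ and $z \in S_n$ be such that the factorizations $uz$ and $wz$ are length additive, let $\mathbf{w}$ be a reduced word for $w$ and $\mathbf{z}$ a reduced word for $z$. If $\mathbf{u}$ is the positive distinguished subexpression for $u$ in $\mathbf{w}$, then the concatenation of $\mathbf{u}$ with $\mathbf{z}$ is the positive distinguished subexpression for $uz$ in the reduced word $\mathbf{w}\mathbf{z}$. -/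
/-! Every letter raises the length of a permutation by at most one. Along `lw` the partial
products of the new mask are those of the PDS of `u`; along `lz` they are `u · z_{(k)}` for the
prefixes `z_{(k)}` of the word `lz`. Since `ℓ(uz) = ℓ(u) + |lz|`, no letter of `lz` can fail
to raise the length, so every prefix is length additive as well. -/

section Length

variable {n : ℕ}

lemma swap_lt_swap_of_adjacent_s18 {a b p q : Fin n} (hab : (b : ℕ) = a + 1) (hpq : p < q)
    (hne : (p, q) ≠ (a, b)) : Equiv.swap a b p < Equiv.swap a b q := by
  simp only [ne_eq, Prod.mk.injEq, Equiv.swap_apply_def, Fin.lt_def, Fin.ext_iff] at *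
  split_ifs <;> omega

lemma len_mul_swap_of_lt {x : Equiv.Perm (Fin n)} {a b : Fin n} (hab : (b : ℕ) = a + 1)
    (hx : x a < x b) : len (x * Equiv.swap a b) = len x + 1 := by
  have hlt : a < b := by simp [Fin.lt_def, hab]
  have hinversions :
      (Finset.univ.filter fun p : Fin n × Fin n =>
          p.1 < p.2 ∧ (x * Equiv.swap a b) p.2 < (x * Equiv.swap a b) p.1) =
        insert (a, b) ((Finset.univ.filter fun p : Fin n × Fin n => p.1 < p.2 ∧ x p.2 < x p.1).map
          (Equiv.prodCongr (Equiv.swap a b) (Equiv.swap a b)).toEmbedding) := by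
    ext ⟨p, q⟩
    rw [Finset.mem_filter_univ]
    simp only [Finset.mem_insert, Finset.mem_map_equiv, Finset.mem_filter_univ,
      Equiv.Perm.mul_apply, Equiv.prodCongr_symm, Equiv.prodCongr_apply, Prod.map,
      Equiv.symm_swap]
    by_cases hpq : (p, q) = (a, b)
    · simp only [Prod.mk.injEq] at hpq
      simp [hpq, hlt, hx]
    · simp only [hpq, false_or]
      refine and_congr_left fun hxpq => ⟨fun h => swap_lt_swap_of_adjacent_s18 hab h hpq, fun h => ?_⟩
      by_cases hs : (Equiv.swap a b p, Equiv.swap a b q) = (a, b)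
      · simp only [Prod.mk.injEq] at hs
        rw [hs.1, hs.2] at hxpq
        exact absurd hx hxpq.not_gt
      · simpa using swap_lt_swap_of_adjacent_s18 hab h hs
  have hnotMem : (a, b) ∉ (Finset.univ.filter fun p : Fin n × Fin n =>
      p.1 < p.2 ∧ x p.2 < x p.1).map
        (Equiv.prodCongr (Equiv.swap a b) (Equiv.swap a b)).toEmbedding := by
    simp [Finset.mem_map_equiv, hlt.not_gt]
  rw [len, len, hinversions, Finset.card_insert_of_notMem hnotMem, Finset.card_map]

lemma len_mul_simpleRefl_le (x : Equiv.Perm (Fin n)) (i : ℕ) :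
    len (x * simpleRefl i) ≤ len x + 1 := by
  unfold simpleRefl
  split_ifs with h
  · set a : Fin n := ⟨i, Nat.lt_of_succ_lt h⟩
    set b : Fin n := ⟨i + 1, h⟩
    have hab : (b : ℕ) = a + 1 := rfl
    rcases lt_or_gt_of_ne (x.injective.ne (show a ≠ b by simp [a, b, Fin.ext_iff])) with hx | hx
    · exact (len_mul_swap_of_lt hab hx).le
    · have hswap := len_mul_swap_of_lt (x := x * Equiv.swap a b) hab (by simpa using hx)
      rw [Equiv.mul_swap_mul_self] at hswap
      omega
  · simp

lemma wordProd_append (l l' : List ℕ) :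
    wordProd (n := n) (l ++ l') = wordProd l * wordProd l' := by
  simp [wordProd]

lemma wordProd_take_succ {l : List ℕ} {j : ℕ} (hj : j < l.length) :
    wordProd (n := n) (l.take (j + 1)) = wordProd (l.take j) * simpleRefl (l.getD j 0) := by
  rw [List.getD_eq_getElem _ _ hj, ← List.take_concat_get' l j hj, wordProd_append]
  simp [wordProd]

lemma len_mul_wordProd_le (x : Equiv.Perm (Fin n)) (l : List ℕ) :
    len (x * wordProd l) ≤ len x + l.length := by
  induction l generalizing x with
  | nil => simp [wordProd]
  | cons i l ih =>
    have hcons : x * wordProd (i :: l) = x * simpleRefl i * wordProd l := by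
      simp [wordProd, mul_assoc]
    rw [hcons, List.length_cons]
    have := len_mul_simpleRefl_le x i
    have := ih (x * simpleRefl i)
    omega

lemma len_mul_wordProd_take {u : Equiv.Perm (Fin n)} {l : List ℕ}
    (hadd : len (u * wordProd l) = len u + l.length) {j : ℕ} (hj : j ≤ l.length) :
    len (u * wordProd (l.take j)) = len u + j := by
  have hupper := len_mul_wordProd_le u (l.take j)
  have hlower := len_mul_wordProd_le (u * wordProd (l.take j)) (l.drop j)
  rw [mul_assoc, ← wordProd_append, List.take_append_drop, hadd] at hlower
  simp only [List.length_take, List.length_drop] at hupper hlower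
  omega

end Length

section Subexpressions

variable {n : ℕ}

lemma maskProd_append {l l' : List ℕ} {m m' : List Bool} (h : m.length = l.length) :
    maskProd (n := n) (l ++ l') (m ++ m') = maskProd l m * maskProd l' m' := by
  simp [maskProd, List.zip_append h.symm]

lemma maskProd_replicate_true (l : List ℕ) :
    maskProd (n := n) l (List.replicate l.length true) = wordProd l := by
  induction l with
  | nil => rfl
  | cons i l ih =>
    simp only [maskProd, wordProd, List.length_cons, List.replicate_succ, List.zip_cons_cons,
      List.map_cons, List.prod_cons, if_true] at ih ⊢
    rw [ih]

lemma IsPDS.append_replicate_true {l l' : List ℕ} {m : List Bool} (hpds : IsPDS (n := n) l m)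
    (hstep : ∀ k < l'.length, len (maskProd (n := n) l m * wordProd (l'.take (k + 1))) =
        len (maskProd (n := n) l m * wordProd (l'.take k)) + 1) :
    IsPDS (n := n) (l ++ l') (m ++ List.replicate l'.length true) := by
  obtain ⟨hlen, hcond⟩ := hpds
  refine ⟨by simp [hlen], fun j hj => ?_⟩
  rcases lt_or_ge j l.length with hjl | hjl
  · rw [List.take_append_of_le_length hjl.le, List.take_append_of_le_length (hlen ▸ hjl.le),
      List.getD_append _ _ _ _ hjl]
    exact hcond j hjl
  · obtain ⟨k, rfl⟩ := Nat.exists_eq_add_of_le hjl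
    have hk : k < l'.length := by simp at hj; omega
    rw [List.take_length_add_append, ← hlen, List.take_length_add_append, hlen,
      List.getD_append_right _ _ _ _ hjl, Nat.add_sub_cancel_left, List.take_replicate,
      min_eq_left hk.le, maskProd_append hlen]
    have hrep : List.replicate k true = List.replicate (l'.take k).length true := by simp [hk.le]
    rw [hrep, maskProd_replicate_true, mul_assoc, ← wordProd_take_succ hk]
    exact hstep k hk

end Subexpressions

theorem PDS_append_general {n : ℕ} (u z : Equiv.Perm (Fin n)) (lw lz : List ℕ) (m : List Bool)
    (hz : wordProd lz = z) (hredz : len z = lz.length)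
    (hadd1 : len (u * z) = len u + len z)
    (hpds : IsPDS (n := n) lw m) (hm : maskProd (n := n) lw m = u) :
    IsPDS (n := n) (lw ++ lz) (m ++ List.replicate lz.length true) ∧
    maskProd (n := n) (lw ++ lz) (m ++ List.replicate lz.length true) = u * z := by
  subst hz
  have hadd : len (u * wordProd lz) = len u + lz.length := hredz ▸ hadd1
  refine ⟨hpds.append_replicate_true fun k hk => ?_, ?_⟩
  · rw [hm, len_mul_wordProd_take hadd hk, len_mul_wordProd_take hadd hk.le, Nat.add_assoc]
  · rw [maskProd_append hpds.1, hm, maskProd_replicate_true]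

/-- If `u ≤ w`, the factorizations `uz` and `wz` are length additive, `lw` and
`lz` are reduced words for `w` and `z`, and `m` is the PDS for `u` in `lw`,
then the concatenation of `m` with the all-`true` mask on `lz` is the positive
distinguished subexpression for `uz` in the reduced word `lw ++ lz`. -/
theorem PDS_append {n : ℕ} (u w z : Equiv.Perm (Fin n)) (lw lz : List ℕ) (m : List Bool)
    (hvw : ∀ i ∈ lw, i + 1 < n) (hvz : ∀ i ∈ lz, i + 1 < n)
    (hw : wordProd lw = w) (hredw : len w = lw.length)
    (hz : wordProd lz = z) (hredz : len z = lz.length)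
    (huw : BruhatLE u w)
    (hadd1 : len (u * z) = len u + len z) (hadd2 : len (w * z) = len w + len z)
    (hpds : IsPDS (n := n) lw m) (hm : maskProd (n := n) lw m = u) :
    IsPDS (n := n) (lw ++ lz) (m ++ List.replicate lz.length true) ∧
    maskProd (n := n) (lw ++ lz) (m ++ List.replicate lz.length true) = u * z :=
  PDS_append_general u z lw lz m hz hredz hadd1 hpds hm
end
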